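/- arXiv:2410.14648 — 8 statements merged into one kernel-verified Lean document; each statement's English description precedes it below -/
import Mathlib

section
/- Let X and Y be metric spaces and q > 1. A point (x,y) in the q-product X ×_q Y (with metric d_q((x₁,y₁),(x₂,y₂)) = (d_X(x₁,x₂)^q + d_Y(y₁,y₂)^q)^(1/q)) is a midpoint of (x₁,y₁) and (x₂,y₂) if and only if x is a midpoint of x₁ and x₂ in X and y is a midpoint of y₁ and y₂ in Y. -/
/-! Write `a₁, a₂, A` for `d(x₁,x), d(x,x₂), d(x₁,x₂)` and `b₁, b₂, B` likewise in `Y`.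
The midpoint condition says `a₁^q + b₁^q = a₂^q + b₂^q = (A/2)^q + (B/2)^q`. By the triangle
inequality, monotonicity and convexity of `t ↦ t^q`,
`(A/2)^q + (B/2)^q ≤ ((a₁+a₂)/2)^q + ((b₁+b₂)/2)^q ≤ (a₁^q + a₂^q + b₁^q + b₂^q)/2`,
and the right end equals the left end. So every inequality is an equality, and strict convexity
and strict monotonicity force `a₁ = a₂`, `b₁ = b₂`, `A = a₁ + a₂`, `B = b₁ + b₂`. -/

/-- The `q`-product distance on `X × Y`:
`d_q((x₁,y₁),(x₂,y₂)) = (d_X(x₁,x₂)^q + d_Y(y₁,y₂)^q)^(1/q)`. -/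
noncomputable def dq {X Y : Type*} [MetricSpace X] [MetricSpace Y] (q : ℝ) (a b : X × Y) : ℝ :=
  (dist a.1 b.1 ^ q + dist a.2 b.2 ^ q) ^ (1 / q)

section MidpointConvexity

variable {s : Set ℝ} {f : ℝ → ℝ} {a b : ℝ}

lemma ConvexOn.map_add_div_two_le (hf : ConvexOn ℝ s f) (ha : a ∈ s) (hb : b ∈ s) :
    f ((a + b) / 2) ≤ (f a + f b) / 2 := by
  have half : (0 : ℝ) ≤ 1 / 2 := by norm_num
  have h := hf.2 ha hb half half (by norm_num)
  simp only [smul_eq_mul] at h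
  rw [show (a + b) / 2 = 1 / 2 * a + 1 / 2 * b by ring]
  linarith

lemma StrictConvexOn.map_add_div_two_lt (hf : StrictConvexOn ℝ s f) (ha : a ∈ s) (hb : b ∈ s)
    (hab : a ≠ b) : f ((a + b) / 2) < (f a + f b) / 2 := by
  have half : (0 : ℝ) < 1 / 2 := by norm_num
  have h := hf.2 ha hb hab half half (by norm_num)
  simp only [smul_eq_mul] at h
  rw [show (a + b) / 2 = 1 / 2 * a + 1 / 2 * b by ring]
  linarith

lemma StrictConvexOn.eq_half_of_map_add_map_eq {a₁ a₂ b₁ b₂ A B : ℝ}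
    (hconv : StrictConvexOn ℝ (Set.Ici 0) f) (hmono : StrictMonoOn f (Set.Ici 0))
    (ha₁ : 0 ≤ a₁) (ha₂ : 0 ≤ a₂) (hb₁ : 0 ≤ b₁) (hb₂ : 0 ≤ b₂) (hA : 0 ≤ A) (hB : 0 ≤ B)
    (hAa : A ≤ a₁ + a₂) (hBb : B ≤ b₁ + b₂)
    (h₁ : f a₁ + f b₁ = f (A / 2) + f (B / 2)) (h₂ : f a₂ + f b₂ = f (A / 2) + f (B / 2)) :
    a₁ = A / 2 ∧ a₂ = A / 2 ∧ b₁ = B / 2 ∧ b₂ = B / 2 := by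
  have mem : ∀ {t : ℝ}, 0 ≤ t → t ∈ Set.Ici (0 : ℝ) := Set.mem_Ici.2
  have hA' : f (A / 2) ≤ f ((a₁ + a₂) / 2) :=
    hmono.monotoneOn (mem (by linarith)) (mem (by linarith)) (by linarith)
  have hB' : f (B / 2) ≤ f ((b₁ + b₂) / 2) :=
    hmono.monotoneOn (mem (by linarith)) (mem (by linarith)) (by linarith)
  have ha := hconv.convexOn.map_add_div_two_le (mem ha₁) (mem ha₂)
  have hb := hconv.convexOn.map_add_div_two_le (mem hb₁) (mem hb₂)
  have eA : A / 2 = (a₁ + a₂) / 2 :=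
    hmono.injOn (mem (by linarith)) (mem (by linarith)) (by linarith)
  have eB : B / 2 = (b₁ + b₂) / 2 :=
    hmono.injOn (mem (by linarith)) (mem (by linarith)) (by linarith)
  have ea : a₁ = a₂ := by
    by_contra hne
    linarith [hconv.map_add_div_two_lt (mem ha₁) (mem ha₂) hne]
  have eb : b₁ = b₂ := by
    by_contra hne
    linarith [hconv.map_add_div_two_lt (mem hb₁) (mem hb₂) hne]
  refine ⟨?_, ?_, ?_, ?_⟩ <;> linarith

end MidpointConvexity

lemma dq_eq_dq_div_two_iff {X Y : Type*} [MetricSpace X] [MetricSpace Y] {q : ℝ} (hq : 0 < q)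
    (a b c d : X × Y) :
    dq q c d = dq q a b / 2 ↔
      dist c.1 d.1 ^ q + dist c.2 d.2 ^ q = (dist a.1 b.1 / 2) ^ q + (dist a.2 b.2 / 2) ^ q := by
  have two : (0 : ℝ) ≤ 2 := zero_le_two
  have hS : 0 ≤ dist a.1 b.1 ^ q + dist a.2 b.2 ^ q := by positivity
  have half : dq q a b / 2 = ((dist a.1 b.1 / 2) ^ q + (dist a.2 b.2 / 2) ^ q) ^ (1 / q) := by
    rw [dq, Real.div_rpow dist_nonneg two, Real.div_rpow dist_nonneg two, ← add_div,
      Real.div_rpow hS (Real.rpow_nonneg two q), one_div, Real.rpow_rpow_inv two hq.ne']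
  rw [half, dq, Real.rpow_left_inj (by positivity) (by positivity) (by positivity)]

/-- A point `(x,y)` in the `q`-product `X ×_q Y` is a midpoint of `(x₁,y₁)` and `(x₂,y₂)`
iff `x` is a midpoint of `x₁, x₂` and `y` is a midpoint of `y₁, y₂`. -/
theorem stmt_0 {X Y : Type*} [MetricSpace X] [MetricSpace Y] (q : ℝ) (hq : 1 < q)
    (x₁ x₂ x : X) (y₁ y₂ y : Y) :
    (dq q (x₁, y₁) (x, y) = dq q (x₁, y₁) (x₂, y₂) / 2 ∧
      dq q (x, y) (x₂, y₂) = dq q (x₁, y₁) (x₂, y₂) / 2) ↔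
    (dist x₁ x = dist x₁ x₂ / 2 ∧ dist x x₂ = dist x₁ x₂ / 2 ∧
      dist y₁ y = dist y₁ y₂ / 2 ∧ dist y y₂ = dist y₁ y₂ / 2) := by
  have hq₀ : 0 < q := zero_lt_one.trans hq
  simp only [dq_eq_dq_div_two_iff hq₀]
  constructor
  · rintro ⟨h₁, h₂⟩
    exact (strictConvexOn_rpow hq).eq_half_of_map_add_map_eq
      (Real.strictMonoOn_rpow_Ici_of_exponent_pos hq₀)
      dist_nonneg dist_nonneg dist_nonneg dist_nonneg dist_nonneg dist_nonneg
      (dist_triangle x₁ x x₂) (dist_triangle y₁ y y₂) h₁ h₂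
  · rintro ⟨hx₁, hx₂, hy₁, hy₂⟩
    simp only [hx₁, hx₂, hy₁, hy₂, and_self]
end

section
/- Let ν be a probability measure on [0,∞) with finite second moment that is not the Dirac measure at 0. Then there exists a probability measure ν' on [0,∞) with finite second moment such that ν is a midpoint of δ₀ and ν' in the 2-Wasserstein space P₂([0,∞)). -/
/-!
Take `ν' = (t ↦ 2t)₊ν`. The only coupling of `δ₀` with `μ` is `δ₀ ⊗ μ`, so `W₂(δ₀, μ)²` is the
second moment of `μ`, and `W₂(δ₀, ν') = 2 W₂(δ₀, ν)`. The coupling `t ↦ (t, 2t)` of `ν` and `ν'`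
costs the second moment `M` of `ν`, and it is optimal: the triangle inequality through `0` gives
`|x - y|² ≥ y² / 2 - x²`, so every coupling costs at least `4M / 2 - M = M`.
-/

open MeasureTheory
open scoped NNReal

/-- The `p`-Wasserstein distance associated to a cost (distance) function `d`,
defined as the infimum over transport plans of the `p`-th root of the transport cost. -/
noncomputable def Wp {Z : Type*} [MeasurableSpace Z] (d : Z → Z → ℝ) (p : ℝ)
    (μ ν : Measure Z) : ℝ :=
  sInf {c : ℝ | ∃ γ : Measure (Z × Z), IsProbabilityMeasure γ ∧
    γ.map Prod.fst = μ ∧ γ.map Prod.snd = ν ∧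
    c = (∫ z, d z.1 z.2 ^ p ∂γ) ^ (1 / p)}

section Coupling

variable {Z : Type*} [MeasurableSpace Z]

theorem Wp_eq_of_forall_integral_le {d : Z → Z → ℝ} {p : ℝ} {μ ν : Measure Z}
    (hd : ∀ x y, 0 ≤ d x y) (hp : 0 ≤ p) (γ₀ : Measure (Z × Z)) [IsProbabilityMeasure γ₀]
    (hγ₀₁ : γ₀.map Prod.fst = μ) (hγ₀₂ : γ₀.map Prod.snd = ν)
    (hmin : ∀ γ : Measure (Z × Z), IsProbabilityMeasure γ → γ.map Prod.fst = μ →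
      γ.map Prod.snd = ν → ∫ z, d z.1 z.2 ^ p ∂γ₀ ≤ ∫ z, d z.1 z.2 ^ p ∂γ) :
    Wp d p μ ν = (∫ z, d z.1 z.2 ^ p ∂γ₀) ^ (1 / p) := by
  refine IsLeast.csInf_eq ⟨⟨γ₀, ‹_›, hγ₀₁, hγ₀₂, rfl⟩, ?_⟩
  rintro c ⟨γ, hγ, hγ₁, hγ₂, rfl⟩
  exact Real.rpow_le_rpow (integral_nonneg fun z => Real.rpow_nonneg (hd _ _) p)
    (hmin γ hγ hγ₁ hγ₂) (one_div_nonneg.mpr hp)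

theorem ae_fst_eq_of_map_fst_eq_dirac [MeasurableSingletonClass Z] {γ : Measure (Z × Z)}
    {a : Z} (h : γ.map Prod.fst = Measure.dirac a) : ∀ᵐ z ∂γ, z.1 = a := by
  refine ae_of_ae_map (p := (· = a)) measurable_fst.aemeasurable ?_
  rw [h, ae_dirac_eq]
  exact Filter.eventually_pure.mpr rfl

theorem Wp_dirac_left [MeasurableSingletonClass Z] (d : Z → Z → ℝ) (p : ℝ) (a : Z)
    (μ : Measure Z) [IsProbabilityMeasure μ] (hd : Measurable (d a)) :
    Wp d p (Measure.dirac a) μ = (∫ x, d a x ^ p ∂μ) ^ (1 / p) := by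
  have hpair : Measurable fun x : Z => (a, x) := measurable_const.prodMk measurable_id
  have hcost : ∀ γ : Measure (Z × Z), γ.map Prod.fst = Measure.dirac a →
      γ.map Prod.snd = μ → ∫ z, d z.1 z.2 ^ p ∂γ = ∫ x, d a x ^ p ∂μ := by
    intro γ hγ₁ hγ₂
    calc ∫ z, d z.1 z.2 ^ p ∂γ = ∫ z, d a z.2 ^ p ∂γ :=
          integral_congr_ae <| (ae_fst_eq_of_map_fst_eq_dirac hγ₁).mono fun z hz => by simp only [hz]
      _ = ∫ x, d a x ^ p ∂μ := by
          rw [← hγ₂, integral_map measurable_snd.aemeasurable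
            (hd.pow_const p).aestronglyMeasurable]
  have hγ₀₁ : (μ.map fun x => (a, x)).map Prod.fst = Measure.dirac a := by
    rw [Measure.map_map measurable_fst hpair]
    simp [Function.comp_def, Measure.map_const]
  have hγ₀₂ : (μ.map fun x => (a, x)).map Prod.snd = μ := by
    rw [Measure.map_map measurable_snd hpair]
    simp [Function.comp_def]
  refine IsLeast.csInf_eq ⟨⟨_, Measure.isProbabilityMeasure_map hpair.aemeasurable, hγ₀₁, hγ₀₂,
    by rw [hcost _ hγ₀₁ hγ₀₂]⟩, ?_⟩
  rintro c ⟨γ, -, hγ₁, hγ₂, rfl⟩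
  rw [hcost γ hγ₁ hγ₂]

end Coupling

section Metric

variable {X : Type*} [PseudoMetricSpace X] [MeasurableSpace X] [OpensMeasurableSpace X]
  [SecondCountableTopology X]

theorem integrable_dist_sq_of_map {γ : Measure (X × X)} (o : X)
    (h₁ : Integrable (fun x => dist o x ^ 2) (γ.map Prod.fst))
    (h₂ : Integrable (fun y => dist o y ^ 2) (γ.map Prod.snd)) :
    Integrable (fun z : X × X => dist z.1 z.2 ^ 2) γ := by
  refine Integrable.mono' (((h₁.comp_measurable measurable_fst).const_mul 2).add
    ((h₂.comp_measurable measurable_snd).const_mul 2))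
    (continuous_dist.pow 2).aestronglyMeasurable (Filter.Eventually.of_forall fun z => ?_)
  have := dist_triangle_left z.1 z.2 o
  simp only [Pi.add_apply, Function.comp_apply, Real.norm_eq_abs, abs_pow, abs_dist]
  nlinarith [dist_nonneg (x := o) (y := z.1), dist_nonneg (x := o) (y := z.2),
    dist_nonneg (x := z.1) (y := z.2), sq_nonneg (dist o z.1 - dist o z.2)]

theorem integral_dist_sq_div_two_sub_le (o : X) {μ ν : Measure X} {γ : Measure (X × X)}
    (hγ₁ : γ.map Prod.fst = μ) (hγ₂ : γ.map Prod.snd = ν)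
    (hμ : Integrable (fun x => dist o x ^ 2) μ) (hν : Integrable (fun y => dist o y ^ 2) ν) :
    (∫ y, dist o y ^ 2 ∂ν) / 2 - ∫ x, dist o x ^ 2 ∂μ ≤ ∫ z, dist z.1 z.2 ^ 2 ∂γ := by
  subst hγ₁ hγ₂
  have hmeas : Measurable fun x : X => dist o x ^ 2 :=
    (measurable_const.dist measurable_id).pow_const 2
  have hμ' : Integrable (fun z : X × X => dist o z.1 ^ 2) γ := hμ.comp_measurable measurable_fst
  have hν' : Integrable (fun z : X × X => dist o z.2 ^ 2 / 2) γ :=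
    (hν.comp_measurable measurable_snd).div_const 2
  rw [integral_map measurable_fst.aemeasurable hmeas.aestronglyMeasurable,
    integral_map measurable_snd.aemeasurable hmeas.aestronglyMeasurable, ← integral_div,
    ← integral_sub hν' hμ']
  refine integral_mono (hν'.sub hμ') (integrable_dist_sq_of_map o hμ hν) fun z => ?_
  have := pow_le_pow_left₀ dist_nonneg (dist_triangle o z.1 z.2) 2
  nlinarith [sq_nonneg (dist o z.1 - dist z.1 z.2)]

end Metric
namespace NNReal

theorem dist_zero_left (t : ℝ≥0) : dist 0 t = t := by
  simp [NNReal.dist_eq]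

theorem integral_sq_map_const_mul (ν : Measure ℝ≥0) (c : ℝ≥0) :
    ∫ t, (t : ℝ) ^ 2 ∂(ν.map (c * ·)) = (c : ℝ) ^ 2 * ∫ t, (t : ℝ) ^ 2 ∂ν := by
  rw [integral_map (measurable_const_mul c).aemeasurable (by fun_prop), ← integral_const_mul]
  simp only [NNReal.coe_mul, mul_pow]

theorem integrable_sq_map_const_mul {ν : Measure ℝ≥0} (c : ℝ≥0)
    (hν : Integrable (fun t : ℝ≥0 => (t : ℝ) ^ 2) ν) :
    Integrable (fun t : ℝ≥0 => (t : ℝ) ^ 2) (ν.map (c * ·)) := by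
  refine (integrable_map_measure (by fun_prop) (measurable_const_mul c).aemeasurable).mpr ?_
  simpa only [Function.comp_def, NNReal.coe_mul, mul_pow] using hν.const_mul ((c : ℝ) ^ 2)

local notation "W₂" => Wp (fun a b : ℝ≥0 => dist a b) 2

theorem Wp_two_dirac_zero (μ : Measure ℝ≥0) [IsProbabilityMeasure μ] :
    W₂ (Measure.dirac 0) μ = √(∫ t, (t : ℝ) ^ 2 ∂μ) := by
  rw [Wp_dirac_left _ _ _ _ (measurable_const.dist measurable_id), Real.sqrt_eq_rpow]
  simp only [dist_zero_left, Real.rpow_two]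

theorem Wp_two_map_two_mul (ν : Measure ℝ≥0) [IsProbabilityMeasure ν]
    (hν : Integrable (fun t : ℝ≥0 => (t : ℝ) ^ 2) ν) :
    W₂ ν (ν.map (2 * ·)) = √(∫ t, (t : ℝ) ^ 2 ∂ν) := by
  have hpair : Measurable fun t : ℝ≥0 => (t, 2 * t) := by fun_prop
  have hγ₀₁ : (ν.map fun t => (t, 2 * t)).map Prod.fst = ν := by
    rw [Measure.map_map measurable_fst hpair]
    simp [Function.comp_def]
  have hγ₀₂ : (ν.map fun t => (t, 2 * t)).map Prod.snd = ν.map (2 * ·) := by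
    rw [Measure.map_map measurable_snd hpair]
    rfl
  have hcost : ∫ z, dist z.1 z.2 ^ (2 : ℝ) ∂(ν.map fun t => (t, 2 * t)) = ∫ t, (t : ℝ) ^ 2 ∂ν := by
    simp only [Real.rpow_two]
    rw [integral_map hpair.aemeasurable (by fun_prop)]
    congr 1 with t
    rw [NNReal.dist_eq, sq_abs]
    push_cast
    ring
  have := Measure.isProbabilityMeasure_map (μ := ν) hpair.aemeasurable
  rw [Wp_eq_of_forall_integral_le (fun _ _ => dist_nonneg) zero_le_two _ hγ₀₁ hγ₀₂, hcost,
    Real.sqrt_eq_rpow]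
  intro γ _ hγ₁ hγ₂
  have hlow := integral_dist_sq_div_two_sub_le 0 hγ₁ hγ₂
    (by simpa only [dist_zero_left] using hν)
    (by simpa only [dist_zero_left] using integrable_sq_map_const_mul 2 hν)
  simp only [dist_zero_left, integral_sq_map_const_mul, NNReal.coe_ofNat] at hlow
  simp only [Real.rpow_two] at hcost ⊢
  linarith

end NNReal

theorem stmt_4_general (ν : Measure ℝ≥0) [IsProbabilityMeasure ν]
    (hmom : Integrable (fun t : ℝ≥0 => (t : ℝ) ^ 2) ν) :
    ∃ ν' : Measure ℝ≥0, IsProbabilityMeasure ν' ∧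
      Integrable (fun t : ℝ≥0 => (t : ℝ) ^ 2) ν' ∧
      Wp (fun a b : ℝ≥0 => dist a b) 2 (Measure.dirac 0) ν =
        Wp (fun a b : ℝ≥0 => dist a b) 2 (Measure.dirac 0) ν' / 2 ∧
      Wp (fun a b : ℝ≥0 => dist a b) 2 ν ν' =
        Wp (fun a b : ℝ≥0 => dist a b) 2 (Measure.dirac 0) ν' / 2 := by
  have : IsProbabilityMeasure (ν.map (2 * ·)) :=
    Measure.isProbabilityMeasure_map (measurable_const_mul 2).aemeasurable
  have hdouble : Wp (fun a b : ℝ≥0 => dist a b) 2 (Measure.dirac 0) (ν.map (2 * ·)) =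
      2 * √(∫ t, (t : ℝ) ^ 2 ∂ν) := by
    rw [NNReal.Wp_two_dirac_zero, NNReal.integral_sq_map_const_mul, Real.sqrt_mul (by positivity),
      Real.sqrt_sq (by positivity)]
    norm_num
  refine ⟨ν.map (2 * ·), this, NNReal.integrable_sq_map_const_mul 2 hmom, ?_, ?_⟩
  · rw [hdouble, NNReal.Wp_two_dirac_zero]
    ring
  · rw [hdouble, NNReal.Wp_two_map_two_mul ν hmom]
    ring

/-- Any probability measure `ν ≠ δ₀` on `[0,∞)` with finite second moment is a midpoint
between `δ₀` and some measure `ν'` in the 2-Wasserstein space `P₂([0,∞))`. -/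
theorem stmt_4 (ν : Measure ℝ≥0) [IsProbabilityMeasure ν]
    (hmom : Integrable (fun t : ℝ≥0 => (t : ℝ) ^ 2) ν)
    (hν : ν ≠ Measure.dirac 0) :
    ∃ ν' : Measure ℝ≥0, IsProbabilityMeasure ν' ∧
      Integrable (fun t : ℝ≥0 => (t : ℝ) ^ 2) ν' ∧
      Wp (fun a b : ℝ≥0 => dist a b) 2 (Measure.dirac 0) ν =
        Wp (fun a b : ℝ≥0 => dist a b) 2 (Measure.dirac 0) ν' / 2 ∧
      Wp (fun a b : ℝ≥0 => dist a b) 2 ν ν' =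
        Wp (fun a b : ℝ≥0 => dist a b) 2 (Measure.dirac 0) ν' / 2 :=
  stmt_4_general ν hmom
end

section
/- Fix p ≥ 1 and for x ≥ 1 let μ_x = (1 - 1/x^p)·δ₀ + (1/x^p)·δ_x ∈ P_p([0,∞)). Then for 1 ≤ x ≤ y one has W_p^p(μ_x, μ_y) = (1 - x^p/y^p) + (1 - x/y)^p, and in particular W_p^p(δ₁, μ_x) = (1 - 1/x^p) + (1 - 1/x)^p. -/
open MeasureTheory
open scoped NNReal ENNReal
set_option maxHeartbeats 1000000

lemma integrable_dirac'' {α E : Type*} [MeasurableSpace α] [MeasurableSingletonClass α]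
    [NormedAddCommGroup E] (f : α → E) (a : α) : Integrable f (Measure.dirac a) := by
  constructor
  · exact (aestronglyMeasurable_const (b := f a)).congr (ae_eq_dirac f).symm
  · rw [HasFiniteIntegral, lintegral_dirac]
    exact ENNReal.coe_lt_top

lemma integrable_smul_dirac {α E : Type*} [MeasurableSpace α] [MeasurableSingletonClass α]
    [NormedAddCommGroup E] (f : α → E) (a : α) {c : ℝ≥0∞} (hc : c ≠ ∞) :
    Integrable f (c • Measure.dirac a) := by
  rcases eq_or_ne c 0 with rfl | h0
  · simp [integrable_zero_measure]
  · exact (integrable_smul_measure h0 hc).2 (integrable_dirac'' f a)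

lemma measure_eq_sum_dirac {Z : Type*} [MeasurableSpace Z] [MeasurableSingletonClass Z]
    (γ : Measure Z) (s : Finset Z) (hs : γ (↑s : Set Z)ᶜ = 0) :
    γ = ∑ z ∈ s, γ {z} • Measure.dirac z := by
  ext t ht
  have h1 : γ t = γ (t ∩ ↑s) := (measure_inter_conull' (measure_mono_null (by
    intro z hz; exact hz.2) hs)).symm
  have h2 : (t ∩ ↑s : Set Z) = ⋃ z ∈ s, t ∩ {z} := by
    ext z; simp [and_comm, eq_comm]
  rw [h1, h2, measure_biUnion_finset ?_ (fun z _ => ht.inter (measurableSet_singleton z))]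
  · rw [Measure.finset_sum_apply]
    refine Finset.sum_congr rfl fun z hz => ?_
    rw [Measure.smul_apply, Measure.dirac_apply' _ ht, smul_eq_mul]
    by_cases hzt : z ∈ t
    · rw [Set.inter_eq_right.2 (by simpa using hzt), Set.indicator_of_mem hzt]
      simp
    · rw [Set.indicator_of_notMem hzt]
      have : t ∩ {z} = ∅ := by
        ext w; simp only [Set.mem_inter_iff, Set.mem_singleton_iff, Set.mem_empty_iff_false,
          iff_false, not_and]
        rintro hw rfl; exact hzt hw
      simp [this]
  · intro a _ b _ hab
    refine Set.disjoint_left.2 fun w hw1 hw2 => ?_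
    exact hab (hw1.2.symm.trans hw2.2)

lemma integral_eq_sum_finset {Z : Type*} [MeasurableSpace Z] [MeasurableSingletonClass Z]
    (γ : Measure Z) [IsFiniteMeasure γ] (s : Finset Z) (hs : γ (↑s : Set Z)ᶜ = 0)
    (f : Z → ℝ) : ∫ z, f z ∂γ = ∑ z ∈ s, (γ {z}).toReal * f z := by
  conv_lhs => rw [measure_eq_sum_dirac γ s hs]
  rw [integral_finset_sum_measure (fun z _ => integrable_smul_dirac f z (measure_ne_top γ _))]
  refine Finset.sum_congr rfl fun z _ => ?_
  rw [integral_smul_measure, integral_dirac, smul_eq_mul]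

/-- The measure `μ_x = (1 - 1/x^p)·δ₀ + (1/x^p)·δ_x` on `[0,∞)`. -/
noncomputable def muX (p : ℝ) (x : ℝ≥0) : Measure ℝ≥0 :=
  (1 - ENNReal.ofReal (((x : ℝ) ^ p)⁻¹)) • Measure.dirac 0 +
    ENNReal.ofReal (((x : ℝ) ^ p)⁻¹) • Measure.dirac x


lemma key (p : ℝ) (hp : 1 ≤ p) (x y : ℝ≥0) (hx : 1 ≤ x) (hxy : x ≤ y) :
    Wp (fun a b : ℝ≥0 => dist a b) p (muX p x) (muX p y) ^ p =
      (1 - (x : ℝ) ^ p / (y : ℝ) ^ p) + (1 - (x : ℝ) / (y : ℝ)) ^ p := by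
  have hp0 : (0:ℝ) < p := lt_of_lt_of_le one_pos hp
  have hxR : (1:ℝ) ≤ (x:ℝ) := by exact_mod_cast hx
  have hyR : (x:ℝ) ≤ (y:ℝ) := by exact_mod_cast hxy
  have hx0 : (0:ℝ) < (x:ℝ) := lt_of_lt_of_le one_pos hxR
  have hy0 : (0:ℝ) < (y:ℝ) := lt_of_lt_of_le hx0 hyR
  have hx0' : x ≠ 0 := by exact_mod_cast hx0.ne'
  have hy0' : y ≠ 0 := by exact_mod_cast hy0.ne'
  set X : ℝ := (x:ℝ) ^ p with hXdef
  set Y : ℝ := (y:ℝ) ^ p with hYdef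
  set Z : ℝ := ((y:ℝ) - (x:ℝ)) ^ p with hZdef
  have hX1 : 1 ≤ X := Real.one_le_rpow hxR hp0.le
  have hXY : X ≤ Y := Real.rpow_le_rpow hx0.le hyR hp0.le
  have hX0 : 0 < X := lt_of_lt_of_le one_pos hX1
  have hY0 : 0 < Y := lt_of_lt_of_le hX0 hXY
  have hZ0 : 0 ≤ Z := Real.rpow_nonneg (by linarith) p
  have hZY : Z ≤ Y := Real.rpow_le_rpow (by linarith) (by linarith) hp0.le
  set u : ℝ := X⁻¹ with hudef
  set v : ℝ := Y⁻¹ with hvdef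
  have hv0 : 0 ≤ v := by positivity
  have hu0 : 0 ≤ u := by positivity
  have hvu : v ≤ u := by
    rw [hudef, hvdef]
    exact inv_anti₀ hX0 hXY
  have hu1 : u ≤ 1 := by
    rw [hudef]
    exact inv_le_one_of_one_le₀ hX1
  set C : ℝ := (1 - X / Y) + (1 - (x:ℝ) / (y:ℝ)) ^ p with hCdef
  have hdivy : (1 - (x:ℝ)/(y:ℝ)) = ((y:ℝ) - (x:ℝ)) / (y:ℝ) := by field_simp
  have hCalt : C = (u - v) * X + v * Z := by
    rw [hCdef, hdivy, Real.div_rpow (by linarith) hy0.le, ← hZdef, ← hYdef,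
      hudef, hvdef]
    field_simp
  have hC0 : 0 ≤ C := by
    rw [hCalt]
    have : 0 ≤ (u - v) * X := mul_nonneg (by linarith) hX0.le
    nlinarith
  -- values of the cost function
  have hf00 : dist (0:ℝ≥0) (0:ℝ≥0) ^ p = 0 := by
    rw [dist_self, Real.zero_rpow hp0.ne']
  have hf0y : dist (0:ℝ≥0) y ^ p = Y := by
    rw [NNReal.dist_eq, NNReal.coe_zero, zero_sub, abs_neg, abs_of_nonneg hy0.le]
  have hfx0 : dist x (0:ℝ≥0) ^ p = X := by
    rw [NNReal.dist_eq, NNReal.coe_zero, sub_zero, abs_of_nonneg hx0.le]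
  have hfxy : dist x y ^ p = Z := by
    rw [NNReal.dist_eq, abs_sub_comm, abs_of_nonneg (by linarith)]
  -- ENNReal coefficients
  have hvu' : ENNReal.ofReal v ≤ ENNReal.ofReal u := ENNReal.ofReal_le_ofReal hvu
  have hu1' : ENNReal.ofReal u ≤ 1 := by
    rw [← ENNReal.ofReal_one]; exact ENNReal.ofReal_le_ofReal hu1
  set A : ℝ≥0∞ := 1 - ENNReal.ofReal u with hAdef
  set B : ℝ≥0∞ := ENNReal.ofReal u - ENNReal.ofReal v with hBdef
  set D : ℝ≥0∞ := ENNReal.ofReal v with hDdef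
  have hAne : A ≠ ∞ := by
    rw [hAdef]; exact ENNReal.sub_ne_top ENNReal.one_ne_top
  have hBne : B ≠ ∞ := by
    rw [hBdef]; exact ENNReal.sub_ne_top ENNReal.ofReal_ne_top
  have hDne : D ≠ ∞ := ENNReal.ofReal_ne_top
  have hBD : B + D = ENNReal.ofReal u := tsub_add_cancel_of_le hvu'
  have hAu : A + ENNReal.ofReal u = 1 := tsub_add_cancel_of_le hu1'
  have hAB : A + B = 1 - ENNReal.ofReal v := tsub_add_tsub_cancel hu1' hvu'
  set γ₀ : Measure (ℝ≥0 × ℝ≥0) :=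
    A • Measure.dirac ((0:ℝ≥0), (0:ℝ≥0)) +
      (B • Measure.dirac (x, (0:ℝ≥0)) + D • Measure.dirac (x, y)) with hγ₀def
  have hγ₀prob : IsProbabilityMeasure γ₀ := by
    constructor
    simp only [hγ₀def, Measure.add_apply, Measure.smul_apply, measure_univ, smul_eq_mul,
      mul_one]
    rw [hBD, hAu]
  have hmuXeq : muX p x = (1 - ENNReal.ofReal u) • Measure.dirac (0:ℝ≥0) +
      ENNReal.ofReal u • Measure.dirac x := rfl
  have hmuYeq : muX p y = (1 - ENNReal.ofReal v) • Measure.dirac (0:ℝ≥0) +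
      ENNReal.ofReal v • Measure.dirac y := rfl
  have hmapfst : γ₀.map Prod.fst = muX p x := by
    rw [hγ₀def, Measure.map_add _ _ measurable_fst, Measure.map_add _ _ measurable_fst,
      Measure.map_smul, Measure.map_smul, Measure.map_smul,
      Measure.map_dirac' measurable_fst, Measure.map_dirac' measurable_fst,
      Measure.map_dirac' measurable_fst, hmuXeq, ← add_smul, hBD, hAdef]
  have hmapsnd : γ₀.map Prod.snd = muX p y := by
    rw [hγ₀def, Measure.map_add _ _ measurable_snd, Measure.map_add _ _ measurable_snd,
      Measure.map_smul, Measure.map_smul, Measure.map_smul,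
      Measure.map_dirac' measurable_snd, Measure.map_dirac' measurable_snd,
      Measure.map_dirac' measurable_snd, hmuYeq, ← add_assoc, ← add_smul, hAB, hDdef]
  have hint : (∫ z : ℝ≥0 × ℝ≥0, dist z.1 z.2 ^ p ∂γ₀) = C := by
    rw [hγ₀def, integral_add_measure (integrable_smul_dirac _ _ hAne)
        ((integrable_smul_dirac _ _ hBne).add_measure (integrable_smul_dirac _ _ hDne)),
      integral_add_measure (integrable_smul_dirac _ _ hBne) (integrable_smul_dirac _ _ hDne),
      integral_smul_measure, integral_smul_measure, integral_smul_measure,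
      integral_dirac, integral_dirac, integral_dirac]
    simp only [smul_eq_mul, hf00, hfx0, hfxy, mul_zero, zero_add]
    have hBtr : B.toReal = u - v := by
      rw [hBdef, ← ENNReal.ofReal_sub _ hv0, ENNReal.toReal_ofReal (by linarith)]
    have hDtr : D.toReal = v := by rw [hDdef, ENNReal.toReal_ofReal hv0]
    rw [hBtr, hDtr, hCalt]
  set S : Set ℝ := {c : ℝ | ∃ γ : Measure (ℝ≥0 × ℝ≥0), IsProbabilityMeasure γ ∧
    γ.map Prod.fst = muX p x ∧ γ.map Prod.snd = muX p y ∧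
    c = (∫ z : ℝ≥0 × ℝ≥0, dist z.1 z.2 ^ p ∂γ) ^ (1 / p)} with hSdef
  have hmem : C ^ (1/p) ∈ S := ⟨γ₀, hγ₀prob, hmapfst, hmapsnd, by rw [hint]⟩
  have hlb : ∀ c ∈ S, C ^ (1/p) ≤ c := by
    rintro c ⟨γ, hγprob, hfst, hsnd, rfl⟩
    haveI := hγprob
    classical
    set s : Finset (ℝ≥0 × ℝ≥0) := {((0:ℝ≥0), (0:ℝ≥0)), ((0:ℝ≥0), y), (x, (0:ℝ≥0)), (x, y)}
      with hsdef
    have hγs : γ ((↑s : Set (ℝ≥0 × ℝ≥0)))ᶜ = 0 := by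
      have hm1 : MeasurableSet (({0, x} : Set ℝ≥0)ᶜ) :=
        ((measurableSet_singleton 0).union (measurableSet_singleton x)).compl
      have hm2 : MeasurableSet (({0, y} : Set ℝ≥0)ᶜ) :=
        ((measurableSet_singleton 0).union (measurableSet_singleton y)).compl
      have h1 : γ (Prod.fst ⁻¹' (({0, x} : Set ℝ≥0)ᶜ)) = 0 := by
        rw [← Measure.map_apply measurable_fst hm1, hfst, hmuXeq]
        simp [Measure.dirac_apply]
      have h2 : γ (Prod.snd ⁻¹' (({0, y} : Set ℝ≥0)ᶜ)) = 0 := by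
        rw [← Measure.map_apply measurable_snd hm2, hsnd, hmuYeq]
        simp [Measure.dirac_apply]
      refine measure_mono_null ?_ (measure_union_null h1 h2)
      rintro ⟨z1, z2⟩ hz
      simp only [Set.mem_union, Set.mem_preimage, Set.mem_compl_iff, Set.mem_insert_iff,
        Set.mem_singleton_iff]
      by_contra h
      push_neg at h
      obtain ⟨h1', h2'⟩ := h
      apply hz
      simp only [hsdef, Finset.coe_insert, Set.mem_insert_iff, Finset.coe_singleton,
        Set.mem_singleton_iff, Prod.ext_iff] at *
      tauto
    have hintγ : (∫ z : ℝ≥0 × ℝ≥0, dist z.1 z.2 ^ p ∂γ) =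
        (γ {((0:ℝ≥0),(0:ℝ≥0))}).toReal * (dist (0:ℝ≥0) (0:ℝ≥0) ^ p) +
        ((γ {((0:ℝ≥0), y)}).toReal * (dist (0:ℝ≥0) y ^ p) +
        ((γ {(x, (0:ℝ≥0))}).toReal * (dist x (0:ℝ≥0) ^ p) +
        (γ {(x, y)}).toReal * (dist x y ^ p))) := by
      rw [integral_eq_sum_finset γ s hγs, hsdef]
      rw [Finset.sum_insert (by simp [Prod.ext_iff, hx0', hy0', Ne.symm hx0', Ne.symm hy0']),
        Finset.sum_insert (by simp [Prod.ext_iff, Ne.symm hx0']),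
        Finset.sum_pair (by simp [Prod.ext_iff, hy0', Ne.symm hy0'])]
    have hdiff : ∀ t : Set (ℝ≥0 × ℝ≥0), γ t = γ (t ∩ ↑s) := fun t =>
      (measure_inter_conull' (measure_mono_null (fun z hz => hz.2) hγs)).symm
    have hmx : γ {(x, (0:ℝ≥0))} + γ {(x, y)} = ENNReal.ofReal u := by
      have h1 : γ (Prod.fst ⁻¹' ({x} : Set ℝ≥0)) = ENNReal.ofReal u := by
        rw [← Measure.map_apply measurable_fst (measurableSet_singleton x), hfst, hmuXeq]
        simp [Measure.dirac_apply, Ne.symm hx0']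
      have h2 : (Prod.fst ⁻¹' ({x} : Set ℝ≥0)) ∩ ↑s = {(x, (0:ℝ≥0)), (x, y)} := by
        ext ⟨z1, z2⟩
        simp only [hsdef, Set.mem_inter_iff, Set.mem_preimage, Set.mem_singleton_iff,
          Finset.coe_insert, Set.mem_insert_iff, Finset.coe_singleton, Prod.ext_iff]
        constructor
        · rintro ⟨rfl, h⟩
          tauto
        · rintro (⟨rfl, rfl⟩ | ⟨rfl, rfl⟩) <;> tauto
      rw [hdiff (Prod.fst ⁻¹' ({x} : Set ℝ≥0)), h2, Set.insert_eq,
        measure_union (by simp [Set.disjoint_singleton, Prod.ext_iff, Ne.symm hy0'])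
          (measurableSet_singleton _)] at h1
      exact h1
    have hmy : γ {((0:ℝ≥0), y)} + γ {(x, y)} = ENNReal.ofReal v := by
      have h1 : γ (Prod.snd ⁻¹' ({y} : Set ℝ≥0)) = ENNReal.ofReal v := by
        rw [← Measure.map_apply measurable_snd (measurableSet_singleton y), hsnd, hmuYeq]
        simp [Measure.dirac_apply, Ne.symm hy0']
      have h2 : (Prod.snd ⁻¹' ({y} : Set ℝ≥0)) ∩ ↑s = {((0:ℝ≥0), y), (x, y)} := by
        ext ⟨z1, z2⟩
        simp only [hsdef, Set.mem_inter_iff, Set.mem_preimage, Set.mem_singleton_iff,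
          Finset.coe_insert, Set.mem_insert_iff, Finset.coe_singleton, Prod.ext_iff]
        constructor
        · rintro ⟨rfl, h⟩
          tauto
        · rintro (⟨rfl, rfl⟩ | ⟨rfl, rfl⟩) <;> tauto
      rw [hdiff (Prod.snd ⁻¹' ({y} : Set ℝ≥0)), h2, Set.insert_eq,
        measure_union (by simp [Set.disjoint_singleton, Prod.ext_iff, Ne.symm hx0'])
          (measurableSet_singleton _)] at h1
      exact h1
    have htA : (γ {((0:ℝ≥0), y)}).toReal + (γ {(x, y)}).toReal = v := by
      rw [← ENNReal.toReal_add (measure_ne_top _ _) (measure_ne_top _ _), hmy,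
        ENNReal.toReal_ofReal hv0]
    have htB : (γ {(x, (0:ℝ≥0))}).toReal + (γ {(x, y)}).toReal = u := by
      rw [← ENNReal.toReal_add (measure_ne_top _ _) (measure_ne_top _ _), hmx,
        ENNReal.toReal_ofReal hu0]
    have hCle : C ≤ ∫ z : ℝ≥0 × ℝ≥0, dist z.1 z.2 ^ p ∂γ := by
      rw [hintγ, hf00, hf0y, hfx0, hfxy, hCalt]
      have h1 : (0:ℝ) ≤ (γ {((0:ℝ≥0), y)}).toReal := ENNReal.toReal_nonneg
      nlinarith [mul_nonneg h1 (sub_nonneg.2 hZY), mul_nonneg h1 hX0.le]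
    exact Real.rpow_le_rpow hC0 hCle (by positivity)
  have hWp : Wp (fun a b : ℝ≥0 => dist a b) p (muX p x) (muX p y) = C ^ (1/p) := by
    rw [Wp]
    exact le_antisymm (csInf_le ⟨C ^ (1/p), fun c hc => hlb c hc⟩ hmem)
      (le_csInf ⟨_, hmem⟩ hlb)
  rw [hWp, one_div, Real.rpow_inv_rpow hC0 hp0.ne']

/-- For `1 ≤ x ≤ y`, `W_p^p(μ_x, μ_y) = (1 - x^p/y^p) + (1 - x/y)^p`; in particular
`W_p^p(δ₁, μ_x) = (1 - 1/x^p) + (1 - 1/x)^p`. -/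
theorem stmt_6 (p : ℝ) (hp : 1 ≤ p) :
    (∀ x y : ℝ≥0, 1 ≤ x → x ≤ y →
      Wp (fun a b : ℝ≥0 => dist a b) p (muX p x) (muX p y) ^ p =
        (1 - (x : ℝ) ^ p / (y : ℝ) ^ p) + (1 - (x : ℝ) / (y : ℝ)) ^ p) ∧
    (∀ x : ℝ≥0, 1 ≤ x →
      Wp (fun a b : ℝ≥0 => dist a b) p (Measure.dirac 1) (muX p x) ^ p =
        (1 - ((x : ℝ) ^ p)⁻¹) + (1 - (x : ℝ)⁻¹) ^ p) := by
  constructor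
  · exact fun x y hx hxy => key p hp x y hx hxy
  · intro x hx
    have h1 : muX p 1 = Measure.dirac (1 : ℝ≥0) := by
      simp [muX, Real.one_rpow]
    have h2 := key p hp 1 x le_rfl hx
    rw [h1] at h2
    rw [h2]
    norm_num [Real.one_rpow]
end

section
/- Fix p ≥ 1 and for x ≥ 1 let μ_x = (1 - 1/x^p)·δ₀ + (1/x^p)·δ_x ∈ P_p([0,∞)). For every s ∈ [0,2) there exists a unique x ≥ 1 with W_p^p(δ₁, μ_x) = s; moreover, for every x > 1 one has W_p^p(μ_x, δ₁) = W_p^p(μ_x, μ_{x²}). -/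
open MeasureTheory
open scoped NNReal

/-!
All measures involved are finitely supported, so each `W_p^p` is computed by exhibiting a
coupling together with potentials `φ, ψ` satisfying `φ a + ψ b ≤ d(a, b)^p` on the supports
whose integrals add up to the cost of the coupling (weak Kantorovich duality).

From `δ₁` the only coupling is the product one, whence
`W_p^p(δ₁, μ_x) = (1 - x^{-p}) + (1 - 1/x)^p`; as a function of `x ≥ 1` this increases
strictly and continuously from `0` to the limit `2`, which gives existence and uniqueness.
Between `μ_x` and `μ_{x²}` the coupling leaves the atom at `0` in place and splits the atom at
`x` into mass `x^{-p} - x^{-2p}` sent to `0` and mass `x^{-2p}` sent to `x²`; the potentials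
`φ a = a^p`, `ψ b = |x - b|^p - x^p` certify that it is optimal, and its cost is again
`(1 - x^{-p}) + (1 - 1/x)^p`.
-/

open Set Filter
open scoped Topology ENNReal

section Duality

variable {Z : Type*} [MeasurableSpace Z] {d : Z → Z → ℝ} {p : ℝ} {μ ν : Measure Z}
  {s t : Set Z}

def couplingCosts (d : Z → Z → ℝ) (p : ℝ) (μ ν : Measure Z) : Set ℝ :=
  {c : ℝ | ∃ γ : Measure (Z × Z), IsProbabilityMeasure γ ∧
    γ.map Prod.fst = μ ∧ γ.map Prod.snd = ν ∧ c = (∫ z, d z.1 z.2 ^ p ∂γ) ^ (1 / p)}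

lemma Wp_eq_sInf_couplingCosts : Wp d p μ ν = sInf (couplingCosts d p μ ν) := rfl

lemma ae_mem_prod_of_map_fst_snd {γ : Measure (Z × Z)} (h₁ : γ.map Prod.fst = μ)
    (h₂ : γ.map Prod.snd = ν) (hμ : ∀ᵐ a ∂μ, a ∈ s) (hν : ∀ᵐ b ∂ν, b ∈ t) :
    ∀ᵐ z ∂γ, z ∈ s ×ˢ t :=
  (ae_of_ae_map measurable_fst.aemeasurable (h₁ ▸ hμ)).and
    (ae_of_ae_map measurable_snd.aemeasurable (h₂ ▸ hν))

lemma integrable_of_ae_mem_finite {X : Type*} [MeasurableSpace X] {m : Measure X}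
    [IsFiniteMeasure m] {s : Set X} {f : X → ℝ} (hf : AEStronglyMeasurable f m)
    (hs : s.Finite) (hm : ∀ᵐ x ∂m, x ∈ s) : Integrable f m := by
  obtain ⟨C, hC⟩ := (hs.image fun x => ‖f x‖).bddAbove
  exact .of_bound hf C (hm.mono fun x hx => hC (mem_image_of_mem _ hx))

-- Finite supports make the cost integrable for every coupling; without this the junk value
-- `0` of a non-integrable cost would break the bound.
theorem integral_add_integral_le_integral_cost {γ : Measure (Z × Z)} [IsProbabilityMeasure γ]
    (hd : Measurable fun z : Z × Z => d z.1 z.2) (h₁ : γ.map Prod.fst = μ)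
    (h₂ : γ.map Prod.snd = ν) (hs : s.Finite) (ht : t.Finite) (hμ : ∀ᵐ a ∂μ, a ∈ s)
    (hν : ∀ᵐ b ∂ν, b ∈ t) {φ ψ : Z → ℝ} (hφ : Integrable φ μ) (hψ : Integrable ψ ν)
    (hφψ : ∀ a ∈ s, ∀ b ∈ t, φ a + ψ b ≤ d a b ^ p) :
    ∫ a, φ a ∂μ + ∫ b, ψ b ∂ν ≤ ∫ z, d z.1 z.2 ^ p ∂γ := by
  have hst := ae_mem_prod_of_map_fst_snd h₁ h₂ hμ hν
  subst h₁ h₂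
  have hφ' : Integrable (fun z => φ z.1) γ := hφ.comp_measurable measurable_fst
  have hψ' : Integrable (fun z => ψ z.2) γ := hψ.comp_measurable measurable_snd
  have hcost : Integrable (fun z => d z.1 z.2 ^ p) γ :=
    integrable_of_ae_mem_finite (hd.pow_const p).aestronglyMeasurable (hs.prod ht) hst
  rw [integral_map measurable_fst.aemeasurable hφ.1,
    integral_map measurable_snd.aemeasurable hψ.1, ← integral_add hφ' hψ']
  refine integral_mono_ae (hφ'.add hψ') hcost ?_
  filter_upwards [hst] with z hz using hφψ _ hz.1 _ hz.2

theorem Wp_rpow_eq_of_dual (hp : 0 < p) (hd₀ : ∀ a b, 0 ≤ d a b)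
    (hd : Measurable fun z : Z × Z => d z.1 z.2) [IsProbabilityMeasure μ]
    {γ₀ : Measure (Z × Z)} (h₁ : γ₀.map Prod.fst = μ) (h₂ : γ₀.map Prod.snd = ν)
    (hs : s.Finite) (ht : t.Finite) (hμ : ∀ᵐ a ∂μ, a ∈ s) (hν : ∀ᵐ b ∂ν, b ∈ t)
    {φ ψ : Z → ℝ} (hφ : Integrable φ μ) (hψ : Integrable ψ ν)
    (hφψ : ∀ a ∈ s, ∀ b ∈ t, φ a + ψ b ≤ d a b ^ p)
    (hγ₀ : ∫ z, d z.1 z.2 ^ p ∂γ₀ = ∫ a, φ a ∂μ + ∫ b, ψ b ∂ν) :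
    Wp d p μ ν ^ p = ∫ z, d z.1 z.2 ^ p ∂γ₀ := by
  have : IsProbabilityMeasure γ₀ := by
    subst h₁; exact Measure.isProbabilityMeasure_of_map Prod.fst
  have hγ₀_nonneg : 0 ≤ ∫ z, d z.1 z.2 ^ p ∂γ₀ :=
    integral_nonneg fun z => Real.rpow_nonneg (hd₀ _ _) p
  have hleast : IsLeast (couplingCosts d p μ ν) ((∫ z, d z.1 z.2 ^ p ∂γ₀) ^ (1 / p)) := by
    refine ⟨⟨γ₀, this, h₁, h₂, rfl⟩, ?_⟩
    rintro c ⟨γ, hγ, hγ₁, hγ₂, rfl⟩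
    refine Real.rpow_le_rpow hγ₀_nonneg ?_ (by positivity)
    exact hγ₀ ▸ integral_add_integral_le_integral_cost hd hγ₁ hγ₂ hs ht hμ hν hφ hψ hφψ
  rw [Wp_eq_sInf_couplingCosts, hleast.csInf_eq, one_div,
    Real.rpow_inv_rpow hγ₀_nonneg hp.ne']

lemma couplingCosts_subset_swap (hd : ∀ a b, d a b = d b a) (μ ν : Measure Z) :
    couplingCosts d p μ ν ⊆ couplingCosts d p ν μ := by
  rintro c ⟨γ, hγ, h₁, h₂, rfl⟩
  refine ⟨γ.map Prod.swap, Measure.isProbabilityMeasure_map measurable_swap.aemeasurable,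
    ?_, ?_, ?_⟩
  · rwa [Measure.map_map measurable_fst measurable_swap]
  · rwa [Measure.map_map measurable_snd measurable_swap]
  · have hswap : ∫ z, d z.1 z.2 ^ p ∂γ.map Prod.swap = ∫ z, d z.2 z.1 ^ p ∂γ :=
      integral_map_equiv MeasurableEquiv.prodComm _
    simp_rw [hswap, hd]

theorem Wp_comm (hd : ∀ a b, d a b = d b a) (μ ν : Measure Z) : Wp d p μ ν = Wp d p ν μ := by
  rw [Wp_eq_sInf_couplingCosts, Wp_eq_sInf_couplingCosts,
    (couplingCosts_subset_swap hd μ ν).antisymm (couplingCosts_subset_swap hd ν μ)]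

theorem Wp_dirac_left_rpow [MeasurableSingletonClass Z] (hp : 0 < p) (hd₀ : ∀ a b, 0 ≤ d a b)
    (hd : Measurable fun z : Z × Z => d z.1 z.2) (a : Z) [IsProbabilityMeasure ν]
    (ht : t.Finite) (hν : ∀ᵐ b ∂ν, b ∈ t) :
    Wp d p (Measure.dirac a) ν ^ p = ∫ b, d a b ^ p ∂ν := by
  have hmk : Measurable (Prod.mk a : Z → Z × Z) := measurable_prodMk_left
  have hcost : ∫ z, d z.1 z.2 ^ p ∂ν.map (Prod.mk a) = ∫ b, d a b ^ p ∂ν :=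
    integral_map hmk.aemeasurable (hd.pow_const p).aestronglyMeasurable
  rw [← hcost]
  refine Wp_rpow_eq_of_dual hp hd₀ hd (φ := 0) (ψ := fun b => d a b ^ p) ?_ ?_
    (finite_singleton a) ht ?_ hν (integrable_zero _ _ _) ?_ ?_ (by simpa using hcost)
  · rw [Measure.map_map measurable_fst hmk]
    simp [Function.comp_def, Measure.map_const]
  · rw [Measure.map_map measurable_snd hmk]
    exact Measure.map_id
  · rw [ae_dirac_eq]; rfl
  · exact integrable_of_ae_mem_finite ((hd.comp hmk).pow_const p).aestronglyMeasurable ht hν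
  · rintro a' rfl b -
    simp

end Duality

section DiracSums

variable {Z : Type*} [MeasurableSpace Z] [MeasurableSingletonClass Z]

lemma ae_mem_pair_of_smul_dirac_add (c c' : ℝ≥0∞) (a b : Z) :
    ∀ᵐ z ∂(c • Measure.dirac a + c' • Measure.dirac b), z ∈ ({a, b} : Set Z) := by
  rw [ae_add_measure_iff]
  exact ⟨Measure.ae_smul_measure (by rw [ae_dirac_eq]; exact Or.inl rfl) c,
    Measure.ae_smul_measure (by rw [ae_dirac_eq]; exact Or.inr rfl) c'⟩

lemma integrable_ofReal_smul_dirac (u : ℝ) (a : Z) (f : Z → ℝ) :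
    Integrable f (ENNReal.ofReal u • Measure.dirac a) :=
  (integrable_dirac (by simp)).smul_measure ENNReal.ofReal_ne_top

lemma integral_ofReal_smul_dirac {u : ℝ} (hu : 0 ≤ u) (a : Z) (f : Z → ℝ) :
    ∫ z, f z ∂(ENNReal.ofReal u • Measure.dirac a) = u * f a := by
  rw [integral_smul_measure, integral_dirac, ENNReal.toReal_ofReal hu, smul_eq_mul]

lemma integral_ofReal_smul_dirac_add {u v : ℝ} (hu : 0 ≤ u) (hv : 0 ≤ v) (a b : Z)
    (f : Z → ℝ) :
    ∫ z, f z ∂(ENNReal.ofReal u • Measure.dirac a + ENNReal.ofReal v • Measure.dirac b) =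
      u * f a + v * f b := by
  rw [integral_add_measure (integrable_ofReal_smul_dirac u a f)
    (integrable_ofReal_smul_dirac v b f), integral_ofReal_smul_dirac hu,
    integral_ofReal_smul_dirac hv]

lemma integral_ofReal_smul_dirac_add_add {u v w : ℝ} (hu : 0 ≤ u) (hv : 0 ≤ v) (hw : 0 ≤ w)
    (a b c : Z) (f : Z → ℝ) :
    ∫ z, f z ∂(ENNReal.ofReal u • Measure.dirac a + ENNReal.ofReal v • Measure.dirac b +
      ENNReal.ofReal w • Measure.dirac c) = u * f a + v * f b + w * f c := by
  rw [integral_add_measure ((integrable_ofReal_smul_dirac u a f).add_measure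
    (integrable_ofReal_smul_dirac v b f)) (integrable_ofReal_smul_dirac w c f),
    integral_ofReal_smul_dirac_add hu hv, integral_ofReal_smul_dirac hw]

end DiracSums

theorem StrictMonoOn.existsUnique_eq_of_tendsto_atTop {α δ : Type*}
    [ConditionallyCompleteLinearOrder α] [TopologicalSpace α] [OrderTopology α]
    [DenselyOrdered α] [LinearOrder δ] [TopologicalSpace δ] [OrderClosedTopology δ]
    {f : α → δ} {a : α} {y l : δ} (hf : StrictMonoOn f (Ici a)) (hc : ContinuousOn f (Ici a))
    (hl : Tendsto f atTop (𝓝 l)) (hay : f a ≤ y) (hyl : y < l) :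
    ∃! x, a ≤ x ∧ f x = y := by
  obtain ⟨b, hyb, hab⟩ := ((hl.eventually (eventually_gt_nhds hyl)).and
    (eventually_ge_atTop a)).exists
  obtain ⟨x, hx, hfx⟩ := intermediate_value_Icc hab (hc.mono Icc_subset_Ici_self) ⟨hay, hyb.le⟩
  exact ⟨x, ⟨hx.1, hfx⟩, fun x' hx' => hf.injOn hx'.1 hx.1 (hx'.2.trans hfx.symm)⟩

lemma NNReal.dist_rpow_le_rpow_add_rpow {p : ℝ} (hp : 0 ≤ p) (a b : ℝ≥0) :
    dist a b ^ p ≤ (a : ℝ) ^ p + (b : ℝ) ^ p := by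
  rw [NNReal.dist_eq]
  rcases le_total (a : ℝ) b with hab | hab
  · have : |(a : ℝ) - b| ^ p ≤ (b : ℝ) ^ p := by
      gcongr
      rw [abs_of_nonpos (by linarith)]
      linarith [a.coe_nonneg]
    linarith [Real.rpow_nonneg a.coe_nonneg p]
  · have : |(a : ℝ) - b| ^ p ≤ (a : ℝ) ^ p := by
      gcongr
      rw [abs_of_nonneg (by linarith)]
      linarith [b.coe_nonneg]
    linarith [Real.rpow_nonneg b.coe_nonneg p]

noncomputable def transportCostMuX (p x : ℝ) : ℝ := 1 - (x ^ p)⁻¹ + (1 - x⁻¹) ^ p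

section TransportCost

variable {p : ℝ}

lemma transportCostMuX_eq {x : ℝ} (hx : 1 ≤ x) :
    transportCostMuX p x = 1 - (x ^ p)⁻¹ + (x ^ p)⁻¹ * (x - 1) ^ p := by
  rw [transportCostMuX, ← Real.inv_rpow (by linarith),
    ← Real.mul_rpow (by positivity) (by linarith), inv_mul_eq_div, sub_div,
    div_self (by positivity), one_div]

lemma transportCostMuX_one (hp : p ≠ 0) : transportCostMuX p 1 = 0 := by
  simp [transportCostMuX, Real.zero_rpow hp]

lemma transportCostMuX_strictMonoOn (hp : 0 < p) :
    StrictMonoOn (transportCostMuX p) (Ici 1) := by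
  intro a ha b hb hab
  simp only [mem_Ici] at ha hb
  have hpow : (b ^ p)⁻¹ < (a ^ p)⁻¹ :=
    inv_strictAnti₀ (by positivity) (Real.rpow_lt_rpow (by linarith) hab hp)
  have hfrac : (1 - a⁻¹) ^ p ≤ (1 - b⁻¹) ^ p := by
    gcongr
    exact sub_nonneg.2 (inv_le_one_of_one_le₀ ha)
  unfold transportCostMuX
  linarith

lemma continuousOn_transportCostMuX (hp : 0 ≤ p) :
    ContinuousOn (transportCostMuX p) (Ici 1) := by
  have hpos : ∀ x ∈ Ici (1 : ℝ), 0 < x := fun x hx => zero_lt_one.trans_le hx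
  exact (continuousOn_const.sub ((continuousOn_id.rpow_const fun _ _ => Or.inr hp).inv₀
    fun x hx => (Real.rpow_pos_of_pos (hpos x hx) p).ne')).add
    ((continuousOn_const.sub (continuousOn_id.inv₀ fun x hx => (hpos x hx).ne')).rpow_const
      fun _ _ => Or.inr hp)

lemma tendsto_transportCostMuX_atTop (hp : 0 < p) :
    Tendsto (transportCostMuX p) atTop (𝓝 2) := by
  have hpow : Tendsto (fun x : ℝ => (x ^ p)⁻¹) atTop (𝓝 0) :=
    (tendsto_rpow_atTop hp).inv_tendsto_atTop
  have hfrac : Tendsto (fun x : ℝ => (1 - x⁻¹) ^ p) atTop (𝓝 ((1 - 0) ^ p)) :=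
    (tendsto_const_nhds.sub tendsto_inv_atTop_zero).rpow_const (Or.inl (by norm_num))
  have := (tendsto_const_nhds (x := (1 : ℝ))).sub hpow |>.add hfrac
  norm_num at this
  exact this

lemma existsUnique_transportCostMuX_eq (hp : 0 < p) {s : ℝ} (hs₀ : 0 ≤ s) (hs₂ : s < 2) :
    ∃! x : ℝ≥0, 1 ≤ x ∧ transportCostMuX p x = s := by
  refine StrictMonoOn.existsUnique_eq_of_tendsto_atTop
    (fun a ha b hb hab => transportCostMuX_strictMonoOn hp (NNReal.one_le_coe.2 ha)
      (NNReal.one_le_coe.2 hb) hab)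
    ((continuousOn_transportCostMuX hp.le).comp NNReal.continuous_coe.continuousOn
      fun a ha => NNReal.one_le_coe.2 ha)
    ((tendsto_transportCostMuX_atTop hp).comp (NNReal.tendsto_coe_atTop.2 tendsto_id))
    ?_ hs₂
  rwa [NNReal.coe_one, transportCostMuX_one hp.ne']

end TransportCost

section MuX

variable {p : ℝ} {x : ℝ≥0}

lemma muX_eq (p : ℝ) (x : ℝ≥0) :
    muX p x = ENNReal.ofReal (1 - ((x : ℝ) ^ p)⁻¹) • Measure.dirac 0 +
      ENNReal.ofReal (((x : ℝ) ^ p)⁻¹) • Measure.dirac x := by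
  rw [muX, ENNReal.ofReal_sub _ (by positivity), ENNReal.ofReal_one]

lemma inv_rpow_le_one (hp : 0 ≤ p) (hx : 1 ≤ x) : ((x : ℝ) ^ p)⁻¹ ≤ 1 :=
  inv_le_one_of_one_le₀ (Real.one_le_rpow (NNReal.one_le_coe.2 hx) hp)

lemma isProbabilityMeasure_muX (hp : 0 ≤ p) (hx : 1 ≤ x) : IsProbabilityMeasure (muX p x) := by
  constructor
  simp only [muX_eq, Measure.coe_add, Measure.coe_smul, Pi.add_apply, Pi.smul_apply,
    measure_univ, smul_eq_mul, mul_one]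
  rw [← ENNReal.ofReal_add (sub_nonneg.2 (inv_rpow_le_one hp hx)) (by positivity),
    sub_add_cancel, ENNReal.ofReal_one]

lemma ae_mem_muX (p : ℝ) (x : ℝ≥0) : ∀ᵐ a ∂muX p x, a ∈ ({0, x} : Set ℝ≥0) :=
  ae_mem_pair_of_smul_dirac_add _ _ 0 x

lemma integrable_muX (p : ℝ) (x : ℝ≥0) (f : ℝ≥0 → ℝ) : Integrable f (muX p x) := by
  rw [muX_eq]
  exact (integrable_ofReal_smul_dirac _ 0 f).add_measure (integrable_ofReal_smul_dirac _ x f)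

lemma integral_muX (hp : 0 ≤ p) (hx : 1 ≤ x) (f : ℝ≥0 → ℝ) :
    ∫ a, f a ∂muX p x = (1 - ((x : ℝ) ^ p)⁻¹) * f 0 + ((x : ℝ) ^ p)⁻¹ * f x := by
  rw [muX_eq, integral_ofReal_smul_dirac_add (sub_nonneg.2 (inv_rpow_le_one hp hx))
    (by positivity)]

lemma Wp_dirac_one_muX_rpow (hp : 0 < p) (hx : 1 ≤ x) :
    Wp (fun a b : ℝ≥0 => dist a b) p (Measure.dirac 1) (muX p x) ^ p =
      transportCostMuX p x := by
  have := isProbabilityMeasure_muX hp.le hx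
  have hx' : (1 : ℝ) ≤ x := NNReal.one_le_coe.2 hx
  have h₁₀ : dist (1 : ℝ≥0) 0 = 1 := by simp [NNReal.dist_eq]
  have h₁ₓ : dist 1 x = (x : ℝ) - 1 := by
    rw [NNReal.dist_eq, abs_sub_comm, NNReal.coe_one, abs_of_nonneg (by linarith)]
  rw [Wp_dirac_left_rpow hp (fun _ _ => dist_nonneg) measurable_dist 1 (toFinite _)
    (ae_mem_muX p x), integral_muX hp.le hx, transportCostMuX_eq hx', h₁₀, h₁ₓ,
    Real.one_rpow, mul_one]

lemma inv_rpow_sq (x : ℝ≥0) (p : ℝ) : (((x ^ 2 : ℝ≥0) : ℝ) ^ p)⁻¹ = (((x : ℝ) ^ p)⁻¹) ^ 2 := by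
  rw [NNReal.coe_pow, ← Real.rpow_pow_comm x.coe_nonneg, inv_pow]

noncomputable def couplingMuXSq (p : ℝ) (x : ℝ≥0) : Measure (ℝ≥0 × ℝ≥0) :=
  ENNReal.ofReal (1 - ((x : ℝ) ^ p)⁻¹) • Measure.dirac (0, 0) +
    ENNReal.ofReal (((x : ℝ) ^ p)⁻¹ - ((x : ℝ) ^ p)⁻¹ ^ 2) • Measure.dirac (x, 0) +
    ENNReal.ofReal (((x : ℝ) ^ p)⁻¹ ^ 2) • Measure.dirac (x, x ^ 2)

lemma map_fst_couplingMuXSq (hp : 0 ≤ p) (hx : 1 ≤ x) :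
    (couplingMuXSq p x).map Prod.fst = muX p x := by
  have ht₁ := inv_rpow_le_one hp hx
  have ht₀ : 0 ≤ ((x : ℝ) ^ p)⁻¹ := by positivity
  simp only [couplingMuXSq, Measure.map_add _ _ measurable_fst, Measure.map_smul,
    Measure.map_dirac' measurable_fst]
  rw [add_assoc, ← add_smul, ← ENNReal.ofReal_add (by nlinarith) (by positivity),
    sub_add_cancel, muX_eq]

lemma map_snd_couplingMuXSq (hp : 0 ≤ p) (hx : 1 ≤ x) :
    (couplingMuXSq p x).map Prod.snd = muX p (x ^ 2) := by
  have ht₁ := inv_rpow_le_one hp hx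
  have ht₀ : 0 ≤ ((x : ℝ) ^ p)⁻¹ := by positivity
  simp only [couplingMuXSq, Measure.map_add _ _ measurable_snd, Measure.map_smul,
    Measure.map_dirac' measurable_snd]
  rw [← add_smul, ← ENNReal.ofReal_add (by linarith) (by nlinarith), muX_eq, inv_rpow_sq]
  ring_nf

lemma integral_couplingMuXSq (hp : 0 ≤ p) (hx : 1 ≤ x) (f : ℝ≥0 × ℝ≥0 → ℝ) :
    ∫ z, f z ∂couplingMuXSq p x =
      (1 - ((x : ℝ) ^ p)⁻¹) * f (0, 0) + (((x : ℝ) ^ p)⁻¹ - ((x : ℝ) ^ p)⁻¹ ^ 2) * f (x, 0) +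
        ((x : ℝ) ^ p)⁻¹ ^ 2 * f (x, x ^ 2) := by
  have ht₁ := inv_rpow_le_one hp hx
  have ht₀ : 0 ≤ ((x : ℝ) ^ p)⁻¹ := by positivity
  exact integral_ofReal_smul_dirac_add_add (by linarith) (by nlinarith) (by positivity) _ _ _ f

lemma Wp_muX_muX_sq_rpow (hp : 0 < p) (hx : 1 ≤ x) :
    Wp (fun a b : ℝ≥0 => dist a b) p (muX p x) (muX p (x ^ 2)) ^ p =
      transportCostMuX p x := by
  have := isProbabilityMeasure_muX hp.le hx
  have hx' : (1 : ℝ) ≤ x := NNReal.one_le_coe.2 hx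
  have hdx0 : dist x 0 = x := by simp [NNReal.dist_eq]
  have hφψ : ∀ a ∈ ({0, x} : Set ℝ≥0), ∀ b ∈ ({0, x ^ 2} : Set ℝ≥0),
      dist a 0 ^ p + (dist x b ^ p - dist x 0 ^ p) ≤ dist a b ^ p := by
    rintro a (rfl | rfl) b -
    · have := NNReal.dist_rpow_le_rpow_add_rpow hp.le x b
      simp only [dist_self, Real.zero_rpow hp.ne', hdx0, dist_comm (0 : ℝ≥0), NNReal.dist_eq,
        NNReal.coe_zero, sub_zero, abs_of_nonneg b.coe_nonneg] at this ⊢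
      linarith
    · linarith
  have hcost : ∫ z, dist z.1 z.2 ^ p ∂couplingMuXSq p x =
      ∫ a, dist a 0 ^ p ∂muX p x + ∫ b, (dist x b ^ p - dist x 0 ^ p) ∂muX p (x ^ 2) := by
    rw [integral_couplingMuXSq hp.le hx, integral_muX hp.le hx,
      integral_muX hp.le (one_le_pow₀ hx), inv_rpow_sq]
    ring
  have hdxx : dist x (x ^ 2) ^ p = (x : ℝ) ^ p * ((x : ℝ) - 1) ^ p := by
    rw [NNReal.dist_eq, abs_sub_comm, NNReal.coe_pow, abs_of_nonneg (by nlinarith),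
      show (x : ℝ) ^ 2 - x = x * (x - 1) by ring, Real.mul_rpow (by positivity) (by linarith)]
  have htx : ((x : ℝ) ^ p)⁻¹ * (x : ℝ) ^ p = 1 := inv_mul_cancel₀ (by positivity)
  rw [Wp_rpow_eq_of_dual hp (fun _ _ => dist_nonneg) measurable_dist
    (map_fst_couplingMuXSq hp.le hx) (map_snd_couplingMuXSq hp.le hx) (toFinite _)
    (toFinite _) (ae_mem_muX p x) (ae_mem_muX p (x ^ 2)) (integrable_muX p x _)
    (integrable_muX p (x ^ 2) _) hφψ hcost, integral_couplingMuXSq hp.le hx,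
    dist_self, Real.zero_rpow hp.ne', hdx0, hdxx, transportCostMuX_eq hx']
  linear_combination (1 - ((x : ℝ) ^ p)⁻¹ + ((x : ℝ) ^ p)⁻¹ * ((x : ℝ) - 1) ^ p) * htx

end MuX

/-- For every `s ∈ [0,2)` there is a unique `x ≥ 1` with `W_p^p(δ₁, μ_x) = s`;
moreover `W_p^p(μ_x, δ₁) = W_p^p(μ_x, μ_{x²})` for every `x > 1`. -/
theorem stmt_7 (p : ℝ) (hp : 1 ≤ p) :
    (∀ s : ℝ, 0 ≤ s → s < 2 →
      ∃! x : ℝ≥0, 1 ≤ x ∧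
        Wp (fun a b : ℝ≥0 => dist a b) p (Measure.dirac 1) (muX p x) ^ p = s) ∧
    (∀ x : ℝ≥0, 1 < x →
      Wp (fun a b : ℝ≥0 => dist a b) p (muX p x) (Measure.dirac 1) ^ p =
        Wp (fun a b : ℝ≥0 => dist a b) p (muX p x) (muX p (x ^ 2)) ^ p) := by
  have hp₀ : 0 < p := by linarith
  refine ⟨fun s hs₀ hs₂ => ?_, fun x hx => ?_⟩
  · refine (existsUnique_congr fun x => and_congr_right fun hx => ?_).1
      (existsUnique_transportCostMuX_eq hp₀ hs₀ hs₂)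
    rw [Wp_dirac_one_muX_rpow hp₀ hx]
  · rw [Wp_comm dist_comm, Wp_dirac_one_muX_rpow hp₀ hx.le, Wp_muX_muX_sq_rpow hp₀ hx.le]
end

section
/- Let X be a compact metric space with diam(X) < π/2, p > 1, and let μ, ν be Borel probability measures on Susp(X). Then W_p(μ,ν) = π if and only if {μ,ν} = {δ_𝟎, δ_𝛑}. -/
/-! The diameter of `Susp(X)` is `π`, so every coupling has cost at most `π`; if `W_p(μ,ν) = π`,
the product coupling `μ ⊗ ν` has cost exactly `π`, hence `d(z,w) = π` for `μ ⊗ ν`-a.e. `(z,w)`.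
Because `diam X < π/2`, in `cos t cos s + sin t sin s cos d(x,y) = -1` the last term is
nonnegative, which forces `{t,s} = {0,π}`: only the two vertices are at distance `π`. A product
measure concentrated on `{(𝟎,𝛑),(𝛑,𝟎)}` is `δ_𝟎 ⊗ δ_𝛑` or `δ_𝛑 ⊗ δ_𝟎`. Conversely `W_p` between
two Dirac masses is their distance. -/

open MeasureTheory

/-- An abstract presentation of the spherical suspension of a metric space `X`:
a metric space `S` together with a surjective parametrisation `pt : X → [0,π] → S`
realising the spherical suspension distance. (This characterises `Susp(X)` up to
isometry; in particular `pt x 0` and `pt x π` are the two vertices `𝟎` and `𝛑`.) -/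
structure SuspensionOf (X : Type*) [MetricSpace X] (S : Type*) [MetricSpace S] where
  pt : X → ℝ → S
  surj : ∀ z : S, ∃ x : X, ∃ t ∈ Set.Icc (0 : ℝ) Real.pi, pt x t = z
  dist_eq : ∀ (x y : X) (t s : ℝ), t ∈ Set.Icc (0 : ℝ) Real.pi →
    s ∈ Set.Icc (0 : ℝ) Real.pi →
    dist (pt x t) (pt y s) =
      Real.arccos (Real.cos t * Real.cos s +
        Real.sin t * Real.sin s * Real.cos (dist x y))

open Real Set

lemma eq_zero_and_eq_pi_of_cos_mul_cos_add_le_neg_one {t s c : ℝ} (ht : t ∈ Icc 0 π)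
    (hs : s ∈ Icc 0 π) (hc : 0 ≤ c) (h : cos t * cos s + sin t * sin s * c ≤ -1) :
    (t = 0 ∧ s = π) ∨ (t = π ∧ s = 0) := by
  have hsin : 0 ≤ sin t * sin s * c :=
    mul_nonneg (mul_nonneg (sin_nonneg_of_mem_Icc ht) (sin_nonneg_of_mem_Icc hs)) hc
  obtain ⟨ht₁, ht₂⟩ := abs_le.mp (abs_cos_le_one t)
  obtain ⟨hs₁, hs₂⟩ := abs_le.mp (abs_cos_le_one s)
  have hcos : (cos t = 1 ∧ cos s = -1) ∨ (cos t = -1 ∧ cos s = 1) := by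
    rcases le_or_gt (cos t) 0 with h₀ | h₀
    · right; constructor <;> nlinarith
    · left; constructor <;> nlinarith
  rw [← arccos_cos ht.1 ht.2, ← arccos_cos hs.1 hs.2]
  rcases hcos with ⟨h₁, h₂⟩ | ⟨h₁, h₂⟩ <;> simp [h₁, h₂]

namespace SuspensionOf

variable {X S : Type*} [MetricSpace X] [MetricSpace S]

lemma pt_zero_eq (susp : SuspensionOf X S) (x y : X) : susp.pt x 0 = susp.pt y 0 := by
  simpa using susp.dist_eq x y 0 0 (left_mem_Icc.mpr pi_pos.le) (left_mem_Icc.mpr pi_pos.le)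

lemma pt_pi_eq (susp : SuspensionOf X S) (x y : X) : susp.pt x π = susp.pt y π := by
  simpa using susp.dist_eq x y π π (right_mem_Icc.mpr pi_pos.le) (right_mem_Icc.mpr pi_pos.le)

lemma dist_pt_zero_pt_pi (susp : SuspensionOf X S) (x y : X) :
    dist (susp.pt x 0) (susp.pt y π) = π := by
  simpa using susp.dist_eq x y 0 π (left_mem_Icc.mpr pi_pos.le) (right_mem_Icc.mpr pi_pos.le)

lemma dist_le_pi (susp : SuspensionOf X S) (z w : S) : dist z w ≤ π := by
  obtain ⟨x, t, ht, rfl⟩ := susp.surj z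
  obtain ⟨y, s, hs, rfl⟩ := susp.surj w
  exact susp.dist_eq x y t s ht hs ▸ arccos_le_pi _

lemma eq_vertices_of_dist_eq_pi (susp : SuspensionOf X S) (hdiam : ∀ a b : X, dist a b ≤ π / 2)
    (x₀ : X) {z w : S} (h : dist z w = π) :
    (z = susp.pt x₀ 0 ∧ w = susp.pt x₀ π) ∨ (z = susp.pt x₀ π ∧ w = susp.pt x₀ 0) := by
  obtain ⟨x, t, ht, rfl⟩ := susp.surj z
  obtain ⟨y, s, hs, rfl⟩ := susp.surj w
  rw [susp.dist_eq x y t s ht hs, arccos_eq_pi] at h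
  have hc : 0 ≤ cos (dist x y) :=
    cos_nonneg_of_mem_Icc ⟨by linarith [dist_nonneg (x := x) (y := y), pi_pos], hdiam x y⟩
  rcases eq_zero_and_eq_pi_of_cos_mul_cos_add_le_neg_one ht hs hc h with ⟨rfl, rfl⟩ | ⟨rfl, rfl⟩
  · exact .inl ⟨susp.pt_zero_eq x x₀, susp.pt_pi_eq y x₀⟩
  · exact .inr ⟨susp.pt_pi_eq x x₀, susp.pt_zero_eq y x₀⟩

lemma continuous_pt (susp : SuspensionOf X S) :
    Continuous fun q : X × Icc (0 : ℝ) π => susp.pt q.1 q.2 := by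
  refine continuous_iff_continuousAt.mpr fun ⟨x, t, ht⟩ => ?_
  rw [ContinuousAt, tendsto_iff_dist_tendsto_zero]
  have hcont : Continuous fun q : X × Icc (0 : ℝ) π =>
      arccos (cos q.2 * cos t + sin q.2 * sin t * cos (dist q.1 x)) := by
    fun_prop
  have h₀ : arccos (cos t * cos t + sin t * sin t * cos (dist x x)) = 0 := by
    simp [← sq, cos_sq_add_sin_sq]
  refine (h₀ ▸ hcont.tendsto (x, ⟨t, ht⟩)).congr fun q => ?_
  exact (susp.dist_eq q.1 x q.2 t q.2.2 ht).symm

lemma compactSpace (susp : SuspensionOf X S) [CompactSpace X] : CompactSpace S := by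
  refine ⟨?_⟩
  convert isCompact_range susp.continuous_pt
  refine (eq_univ_of_forall fun z => ?_).symm
  obtain ⟨x, t, ht, rfl⟩ := susp.surj z
  exact ⟨(x, ⟨t, ht⟩), rfl⟩

end SuspensionOf

section Wasserstein

variable {Z : Type*} [MeasurableSpace Z] {d : Z → Z → ℝ} {p : ℝ} {μ ν : Measure Z}

lemma Wp_le_of_coupling (hd : ∀ x y, 0 ≤ d x y) (γ : Measure (Z × Z)) [IsProbabilityMeasure γ]
    (hγ₁ : γ.map Prod.fst = μ) (hγ₂ : γ.map Prod.snd = ν) :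
    Wp d p μ ν ≤ (∫ z, d z.1 z.2 ^ p ∂γ) ^ (1 / p) := by
  refine csInf_le ⟨0, ?_⟩ ⟨γ, inferInstance, hγ₁, hγ₂, rfl⟩
  rintro _ ⟨γ', -, -, -, rfl⟩
  exact rpow_nonneg (integral_nonneg fun z : Z × Z => rpow_nonneg (hd z.1 z.2) p) _

lemma Wp_dirac_dirac [MeasurableSingletonClass Z] (hp : p ≠ 0) {a b : Z} (hab : 0 ≤ d a b) :
    Wp d p (Measure.dirac a) (Measure.dirac b) = d a b := by
  suffices h : {c : ℝ | ∃ γ : Measure (Z × Z), IsProbabilityMeasure γ ∧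
      γ.map Prod.fst = Measure.dirac a ∧ γ.map Prod.snd = Measure.dirac b ∧
      c = (∫ z, d z.1 z.2 ^ p ∂γ) ^ (1 / p)} = {d a b} by
    rw [Wp, h, csInf_singleton]
  have hcost : (d a b ^ p) ^ (1 / p) = d a b := by
    rw [← rpow_mul hab, mul_one_div_cancel hp, rpow_one]
  ext c
  simp only [Set.mem_ofPred_eq, Set.mem_singleton_iff]
  constructor
  · rintro ⟨γ, hγ, hγ₁, hγ₂, rfl⟩
    have h₁ : ∀ᵐ z ∂γ, z.1 = a := ae_of_ae_map measurable_fst.aemeasurable (hγ₁ ▸ ae_eq_dirac id)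
    have h₂ : ∀ᵐ z ∂γ, z.2 = b := ae_of_ae_map measurable_snd.aemeasurable (hγ₂ ▸ ae_eq_dirac id)
    have hconst : (fun z : Z × Z => d z.1 z.2 ^ p) =ᵐ[γ] fun _ => d a b ^ p :=
      (h₁.and h₂).mono fun z hz => by simp only [hz.1, hz.2]
    rw [integral_congr_ae hconst, integral_const, probReal_univ, one_smul, hcost]
  · rintro rfl
    refine ⟨Measure.dirac (a, b), inferInstance, ?_, ?_, ?_⟩
    · exact Measure.map_dirac' measurable_fst _
    · exact Measure.map_dirac' measurable_snd _
    · rw [integral_dirac, hcost]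

lemma ae_eq_of_Wp_eq_of_le [IsProbabilityMeasure μ] [IsProbabilityMeasure ν] (hp : 0 < p)
    {D : ℝ} (hmeas : Measurable fun z : Z × Z => d z.1 z.2) (hd : ∀ x y, 0 ≤ d x y)
    (hD : ∀ x y, d x y ≤ D) (hW : Wp d p μ ν = D) :
    ∀ᵐ z ∂μ.prod ν, d z.1 z.2 = D := by
  obtain ⟨x⟩ := nonempty_of_isProbabilityMeasure μ
  have hD₀ : 0 ≤ D := (hd x x).trans (hD x x)
  have hle : ∀ z : Z × Z, d z.1 z.2 ^ p ≤ D ^ p := fun z => rpow_le_rpow (hd _ _) (hD _ _) hp.le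
  have hint : Integrable (fun z : Z × Z => d z.1 z.2 ^ p) (μ.prod ν) :=
    (integrable_const (D ^ p)).mono' (hmeas.pow_const p).aestronglyMeasurable
      (ae_of_all _ fun z => by rw [norm_of_nonneg (rpow_nonneg (hd _ _) p)]; exact hle z)
  have hcost : D ^ p ≤ ∫ z, d z.1 z.2 ^ p ∂μ.prod ν := by
    have hW_le := hW ▸ Wp_le_of_coupling hd (μ.prod ν) (by simp) (by simp) (p := p)
    calc D ^ p ≤ ((∫ z, d z.1 z.2 ^ p ∂μ.prod ν) ^ (1 / p)) ^ p := rpow_le_rpow hD₀ hW_le hp.le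
      _ = ∫ z, d z.1 z.2 ^ p ∂μ.prod ν := by
        rw [← rpow_mul (integral_nonneg fun z => rpow_nonneg (hd _ _) p),
          one_div_mul_cancel hp.ne', rpow_one]
  have hcost_eq : ∫ z, d z.1 z.2 ^ p ∂μ.prod ν = ∫ _, D ^ p ∂μ.prod ν := by
    refine le_antisymm (integral_mono hint (integrable_const _) hle) ?_
    rwa [integral_const, probReal_univ, one_smul]
  refine ((integral_eq_iff_of_ae_le hint (integrable_const _) (ae_of_all _ hle)).mp hcost_eq).mono
    fun z hz => ?_
  exact (rpow_left_inj (hd _ _) hD₀ hp.ne').mp hz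

end Wasserstein

lemma eq_one_and_eq_one_of_mul_add_mul_eq_one {a b c d : ℝ} (ha : 0 ≤ a) (hb : 0 ≤ b)
    (hc : 0 ≤ c) (hd : 0 ≤ d) (hac : a + c ≤ 1) (hbd : b + d ≤ 1) (h : a * b + c * d = 1) :
    (a = 1 ∧ b = 1) ∨ (c = 1 ∧ d = 1) := by
  have hac' : a + c = 1 := by nlinarith
  have hab : a * (1 - b) = 0 := by nlinarith [mul_nonneg hc (by linarith : 0 ≤ 1 - d)]
  rcases mul_eq_zero.mp hab with ha₀ | hb₁
  · right; constructor <;> nlinarith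
  · left; constructor <;> nlinarith

section Dirac

variable {Z : Type*} [MeasurableSpace Z] {μ ν : Measure Z}
  [IsProbabilityMeasure μ] [IsProbabilityMeasure ν]

lemma eq_dirac_of_measure_singleton_eq_one {a : Z} [MeasurableSingletonClass Z] (h : μ {a} = 1) :
    μ = Measure.dirac a := by
  have hae : ∀ᵐ z ∂μ, z ∈ ({a} : Set Z) :=
    mem_ae_iff.mpr ((prob_compl_eq_zero_iff (measurableSet_singleton a)).mpr h)
  simpa using (ProbabilityTheory.hasLaw_dirac_of_ae_eq (X := id) hae).map_eq

lemma eq_dirac_pair_of_ae_prod [MeasurableSingletonClass Z] {a b : Z} (hab : a ≠ b)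
    (h : ∀ᵐ z ∂μ.prod ν, (z.1 = a ∧ z.2 = b) ∨ (z.1 = b ∧ z.2 = a)) :
    (μ = Measure.dirac a ∧ ν = Measure.dirac b) ∨ (μ = Measure.dirac b ∧ ν = Measure.dirac a) := by
  have hsum : μ {a} * ν {b} + μ {b} * ν {a} = 1 := by
    have hset : {z : Z × Z | (z.1 = a ∧ z.2 = b) ∨ (z.1 = b ∧ z.2 = a)} =
        {a} ×ˢ {b} ∪ {b} ×ˢ {a} := by
      ext ⟨x, y⟩
      simp only [Set.mem_ofPred_eq, Set.mem_union, Set.mem_prod, Set.mem_singleton_iff]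
    have hdisj : Disjoint (({a} : Set Z) ×ˢ ({b} : Set Z)) ({b} ×ˢ {a}) := by
      simp [hab]
    rw [← measure_univ (μ := μ.prod ν), ← (ae_iff_measure_eq (by measurability)).mp h, hset,
      measure_union hdisj (by measurability), Measure.prod_prod, Measure.prod_prod]
  have hμ : μ {a} + μ {b} ≤ 1 := by
    rw [← measure_union (disjoint_singleton.mpr hab) (measurableSet_singleton b)]
    exact prob_le_one
  have hν : ν {b} + ν {a} ≤ 1 := by
    rw [← measure_union (disjoint_singleton.mpr hab.symm) (measurableSet_singleton a)]
    exact prob_le_one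
  have hsum' := congrArg ENNReal.toReal hsum
  have hμ' := ENNReal.toReal_mono ENNReal.one_ne_top hμ
  have hν' := ENNReal.toReal_mono ENNReal.one_ne_top hν
  simp only [ENNReal.toReal_add, ENNReal.toReal_mul, ne_eq, measure_ne_top, not_false_eq_true,
    ENNReal.mul_ne_top, ENNReal.toReal_one] at hsum' hμ' hν'
  rcases eq_one_and_eq_one_of_mul_add_mul_eq_one ENNReal.toReal_nonneg ENNReal.toReal_nonneg
    ENNReal.toReal_nonneg ENNReal.toReal_nonneg hμ' hν' hsum' with ⟨h₁, h₂⟩ | ⟨h₁, h₂⟩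
  all_goals simp only [ENNReal.toReal_eq_one_iff] at h₁ h₂
  · exact .inl ⟨eq_dirac_of_measure_singleton_eq_one h₁, eq_dirac_of_measure_singleton_eq_one h₂⟩
  · exact .inr ⟨eq_dirac_of_measure_singleton_eq_one h₁, eq_dirac_of_measure_singleton_eq_one h₂⟩

end Dirac

/-- For a compact metric space `X` with `diam(X) < π/2` and `p > 1`, two probability
measures `μ, ν` on `Susp(X)` satisfy `W_p(μ,ν) = π` iff `{μ,ν} = {δ_𝟎, δ_𝛑}`. -/
theorem stmt_9 {X S : Type*} [MetricSpace X] [CompactSpace X] [Nonempty X]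
    [MetricSpace S] [MeasurableSpace S] [BorelSpace S]
    (hdiam : ∀ a b : X, dist a b < Real.pi / 2)
    (p : ℝ) (hp : 1 < p) (susp : SuspensionOf X S)
    (μ ν : Measure S) [IsProbabilityMeasure μ] [IsProbabilityMeasure ν] :
    Wp (fun a b : S => dist a b) p μ ν = Real.pi ↔
      (μ = Measure.dirac (susp.pt (Classical.arbitrary X) 0) ∧
        ν = Measure.dirac (susp.pt (Classical.arbitrary X) Real.pi)) ∨
      (μ = Measure.dirac (susp.pt (Classical.arbitrary X) Real.pi) ∧
        ν = Measure.dirac (susp.pt (Classical.arbitrary X) 0)) := by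
  have := susp.compactSpace
  have hp₀ : 0 < p := one_pos.trans hp
  have hdist := susp.dist_pt_zero_pt_pi (Classical.arbitrary X) (Classical.arbitrary X)
  constructor
  · intro hW
    have hae := ae_eq_of_Wp_eq_of_le hp₀ continuous_dist.measurable (fun _ _ => dist_nonneg)
      susp.dist_le_pi hW
    refine eq_dirac_pair_of_ae_prod (fun h => pi_ne_zero ?_) (hae.mono fun z hz =>
      susp.eq_vertices_of_dist_eq_pi (fun a b => (hdiam a b).le) _ hz)
    rw [← hdist, h, dist_self]
  · rintro (⟨rfl, rfl⟩ | ⟨rfl, rfl⟩)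
    · rw [Wp_dirac_dirac hp₀.ne' dist_nonneg, hdist]
    · rw [Wp_dirac_dirac hp₀.ne' dist_nonneg, dist_comm, hdist]
end

section
/- Let X be a compact metric space with diam(X) < π/2, 0 ≤ t ≤ π, and define T_t : Susp(X)\{𝟎,𝛑} → X×{t} by T_t([x,s]) = [x,t]. Then for every [x,s] with s ∉ {0,π}, the point T_t([x,s]) is the unique minimizer of [y,t] ↦ d_Susp([x,s],[y,t]) over X×{t}, and d_Susp([x,s],[x,t]) = |s-t|. -/
open Real

/-- The spherical suspension distance between `[x,t]` and `[y,s]`. -/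
noncomputable def dSusp {X : Type*} [MetricSpace X] (x : X) (t : ℝ) (y : X) (s : ℝ) : ℝ :=
  Real.arccos (Real.cos t * Real.cos s + Real.sin t * Real.sin s * Real.cos (dist x y))

lemma arccos_anti : Antitone Real.arccos := by
  intro a b h
  unfold Real.arccos
  have := Real.monotone_arcsin h
  linarith

/-- For `[x,s]` with `s ∉ {0,π}` and any `t ∈ [0,π]`, the point `T_t([x,s]) = [x,t]` is the
unique minimizer of `[y,t] ↦ d_Susp([x,s],[y,t])` over the slice `X × {t}`, and
`d_Susp([x,s],[x,t]) = |s - t|`. -/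
theorem stmt_10 {X : Type*} [MetricSpace X] [CompactSpace X]
    (hdiam : ∀ a b : X, dist a b < π / 2)
    (x : X) (s t : ℝ) (hs : s ∈ Set.Ioo (0 : ℝ) π) (ht : t ∈ Set.Icc (0 : ℝ) π) :
    (∀ y : X, dSusp x s x t ≤ dSusp x s y t) ∧
    (∀ y : X, dSusp x s y t = dSusp x s x t → y = x ∨ t = 0 ∨ t = π) ∧
    dSusp x s x t = |s - t| := by
  have hsinS : 0 < Real.sin s := Real.sin_pos_of_pos_of_lt_pi hs.1 hs.2
  have hsinT : 0 ≤ Real.sin t := Real.sin_nonneg_of_nonneg_of_le_pi ht.1 ht.2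
  have hself : Real.cos s * Real.cos t + Real.sin s * Real.sin t * Real.cos (dist x x) =
      Real.cos (s - t) := by
    simp [Real.cos_sub]
  have harg : ∀ y : X,
      Real.cos s * Real.cos t + Real.sin s * Real.sin t * Real.cos (dist x y)
        ≤ Real.cos s * Real.cos t + Real.sin s * Real.sin t := by
    intro y
    have h1 : Real.cos (dist x y) ≤ 1 := Real.cos_le_one _
    nlinarith [mul_nonneg hsinS.le hsinT]
  have hle : ∀ y : X, dSusp x s x t ≤ dSusp x s y t := by
    intro y
    unfold dSusp
    apply arccos_anti
    have := harg y
    rw [Real.cos_sub] at hself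
    nlinarith [Real.cos_le_one (dist x y), mul_nonneg hsinS.le hsinT, dist_self x,
      Real.cos_zero]
  refine ⟨hle, ?_, ?_⟩
  · intro y hy
    by_cases ht0 : t = 0
    · exact Or.inr (Or.inl ht0)
    by_cases htpi : t = π
    · exact Or.inr (Or.inr htpi)
    left
    have hsinT' : 0 < Real.sin t :=
      Real.sin_pos_of_pos_of_lt_pi (lt_of_le_of_ne ht.1 (Ne.symm ht0))
        (lt_of_le_of_ne ht.2 htpi)
    -- from equality of arccos on [-1,1], arguments equal
    have hmem : ∀ z : X, Real.cos s * Real.cos t + Real.sin s * Real.sin t * Real.cos (dist x z)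
        ∈ Set.Icc (-1 : ℝ) 1 := by
      intro z
      constructor
      · nlinarith [Real.neg_one_le_cos (dist x z), mul_nonneg hsinS.le hsinT,
          Real.neg_one_le_cos (s + t), Real.cos_add s t]
      · nlinarith [Real.cos_le_one (dist x z), mul_nonneg hsinS.le hsinT,
          Real.cos_le_one (s - t), Real.cos_sub s t]
    have heq : Real.cos s * Real.cos t + Real.sin s * Real.sin t * Real.cos (dist x y)
        = Real.cos s * Real.cos t + Real.sin s * Real.sin t * Real.cos (dist x x) := by
      apply Real.arccos_injOn (hmem y) (hmem x)
      have h1 : dSusp x s y t = Real.arccos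
          (Real.cos s * Real.cos t + Real.sin s * Real.sin t * Real.cos (dist x y)) := by
        unfold dSusp; ring_nf
      have h2 : dSusp x s x t = Real.arccos
          (Real.cos s * Real.cos t + Real.sin s * Real.sin t * Real.cos (dist x x)) := by
        unfold dSusp; ring_nf
      rw [← h1, ← h2, hy]
    have hcos1 : Real.cos (dist x y) = 1 := by
      have hne : Real.sin s * Real.sin t ≠ 0 := by positivity
      have : Real.cos (dist x x) = 1 := by simp
      rw [this] at heq
      have h3 : Real.sin s * Real.sin t * Real.cos (dist x y)
          = Real.sin s * Real.sin t * 1 := by linarith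
      exact mul_left_cancel₀ hne h3
    have hd : dist x y = 0 := by
      have h2 := (Real.cos_eq_one_iff_of_lt_of_lt (x := dist x y)
        (by nlinarith [dist_nonneg (x := x) (y := y), Real.pi_pos])
        (by nlinarith [hdiam x y, Real.pi_pos])).1 hcos1
      exact h2
    exact (dist_eq_zero.1 hd).symm
  · have habs : |s - t| ≤ π := by
      rw [abs_le]
      exact ⟨by linarith [hs.1, ht.2], by linarith [hs.2, ht.1]⟩
    have : dSusp x s x t = Real.arccos (Real.cos (s - t)) := by
      unfold dSusp
      rw [← hself]
    rw [this, ← Real.cos_abs, Real.arccos_cos (abs_nonneg _) habs]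
end

section
/- Let X be a compact metric space with diam(X) < π/2. Fix [x,t] ∈ Susp(X) with 0 ≤ t < π/2 and y ∈ X, and let γ_s = [y, sπ/2] for s ∈ [0,1] be the geodesic from 𝟎 to [y,π/2]. Then the unique minimizer of s ↦ d_Susp([x,t], γ_s) on [0,1] is given by γ_s with (π/2)s = arctan(cos(d(x,y))·tan(t)). In particular, the minimizing parameter (π/2)s equals t if and only if [x,t] = γ_s (i.e. x = y or t = 0). -/
/-!
With `c = cos d(x,y) > 0`, harmonic addition rewrites the argument of the arccos as
`cos t cos u + c sin t sin u = R cos (u - φ)`, where `R = √(cos² t + c² sin² t) ∈ (0, 1]` and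
`φ = arctan (c tan t) ∈ [0, π/2)`. For `u ∈ [0, π/2]` we have `|u - φ| ≤ π`, so `R cos (u - φ)`
is strictly maximal at `u = φ`, and `arccos` is strictly decreasing. Finally `φ = t` forces
`(c - 1) tan t = 0`, i.e. `d(x,y) = 0` or `t = 0`.
-/

open Real

namespace Real

theorem mul_cos_add_mul_sin_eq_sqrt_mul_cos_sub {a : ℝ} (ha : 0 < a) (b u : ℝ) :
    a * cos u + b * sin u = √(a ^ 2 + b ^ 2) * cos (u - arctan (b / a)) := by
  have hsqrt : √(1 + (b / a) ^ 2) = √(a ^ 2 + b ^ 2) / a := by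
    rw [eq_div_iff ha.ne', ← sqrt_sq ha.le, ← sqrt_mul (by positivity), sqrt_sq ha.le]
    congr 1
    field_simp
  rw [cos_sub, cos_arctan, sin_arctan, hsqrt]
  field_simp

theorem arccos_lt_arccos_mul_cos {r v : ℝ} (hr₀ : 0 < r) (hr₁ : r ≤ 1) (hv : v ≠ 0)
    (hvπ : |v| ≤ π) : arccos r < arccos (r * cos v) := by
  obtain ⟨hv₁, hv₂⟩ := abs_le.mp hvπ
  have hcos : cos v < 1 := (cos_le_one v).lt_of_ne fun h ↦
    hv ((cos_eq_one_iff_of_lt_of_lt (by linarith [pi_pos]) (by linarith [pi_pos])).mp h)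
  refine strictAntiOn_arccos ⟨?_, ?_⟩ ⟨by linarith, hr₁⟩ (by nlinarith)
  · nlinarith [neg_one_le_cos v]
  · nlinarith

theorem arctan_mul_tan_eq_self_iff {c t : ℝ} (ht : t ∈ Set.Ioo (-(π / 2)) (π / 2)) :
    arctan (c * tan t) = t ↔ c = 1 ∨ t = 0 := by
  have hinv : arctan (tan t) = t := arctan_eq_of_tan_eq rfl ht
  calc arctan (c * tan t) = t ↔ arctan (c * tan t) = arctan (tan t) := by rw [hinv]
    _ ↔ (c - 1) * tan t = 0 := by rw [arctan_injective.eq_iff, sub_one_mul, sub_eq_zero]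
    _ ↔ c = 1 ∨ t = 0 := by
      rw [mul_eq_zero, sub_eq_zero]
      refine or_congr_right ⟨fun h ↦ ?_, fun h ↦ by rw [h, tan_zero]⟩
      rw [← hinv, h, arctan_zero]

end Real

theorem dSusp_eq_arccos_mul_cos_sub {X : Type*} [MetricSpace X] (x y : X) {t : ℝ}
    (ht : 0 < cos t) (u : ℝ) :
    dSusp x t y u = arccos (√(cos t ^ 2 + (sin t * cos (dist x y)) ^ 2) *
      cos (u - arctan (cos (dist x y) * tan t))) := by
  have hslope : cos (dist x y) * tan t = sin t * cos (dist x y) / cos t := by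
    rw [tan_eq_sin_div_cos]; ring
  rw [dSusp, hslope, ← mul_cos_add_mul_sin_eq_sqrt_mul_cos_sub ht]
  ring_nf

theorem sqrt_cos_sq_add_sq_le_one {t c : ℝ} (hc : |c| ≤ 1) :
    √(cos t ^ 2 + (sin t * c) ^ 2) ≤ 1 := by
  rw [sqrt_le_one]
  have : c ^ 2 ≤ 1 := by nlinarith [abs_nonneg c, sq_abs c]
  nlinarith [sin_sq_add_cos_sq t, sq_nonneg (sin t)]

theorem stmt_11_general {X : Type*} [MetricSpace X]
    (hdiam : ∀ a b : X, dist a b < π / 2)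
    (x y : X) (t : ℝ) (ht0 : 0 ≤ t) (ht : t < π / 2) :
    ∀ s₀ : ℝ, s₀ = Real.arctan (Real.cos (dist x y) * Real.tan t) / (π / 2) →
      s₀ ∈ Set.Icc (0 : ℝ) 1 ∧
      (∀ s ∈ Set.Icc (0 : ℝ) 1, s ≠ s₀ →
        dSusp x t y (s₀ * (π / 2)) < dSusp x t y (s * (π / 2))) ∧
      ((π / 2) * s₀ = t ↔ x = y ∨ t = 0) := by
  intro s₀ hs₀
  have hπ : 0 < π / 2 := by positivity
  have hd : 0 ≤ dist x y := dist_nonneg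
  have hc : 0 < cos (dist x y) := cos_pos_of_mem_Ioo ⟨by linarith, hdiam x y⟩
  have hcos : 0 < cos t := cos_pos_of_mem_Ioo ⟨by linarith, ht⟩
  set φ := arctan (cos (dist x y) * tan t)
  have hφ₀ : 0 ≤ φ :=
    arctan_nonneg.mpr (mul_nonneg hc.le (tan_nonneg_of_nonneg_of_le_pi_div_two ht0 ht.le))
  have hφ₁ : φ < π / 2 := arctan_lt_pi_div_two _
  have hs₀φ : s₀ * (π / 2) = φ := by rw [hs₀]; field_simp
  refine ⟨⟨by rw [hs₀]; positivity, by rw [hs₀, div_le_one hπ]; exact hφ₁.le⟩,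
    fun s hs hne ↦ ?_, ?_⟩
  · rw [dSusp_eq_arccos_mul_cos_sub x y hcos, dSusp_eq_arccos_mul_cos_sub x y hcos, hs₀φ,
      sub_self, cos_zero, mul_one]
    refine arccos_lt_arccos_mul_cos (sqrt_pos.mpr (by positivity))
      (sqrt_cos_sq_add_sq_le_one (abs_cos_le_one _)) ?_
      (abs_le.mpr ⟨by nlinarith [hs.1], by nlinarith [hs.2]⟩)
    exact sub_ne_zero.mpr fun h ↦ hne (mul_right_cancel₀ hπ.ne' (h.trans hs₀φ.symm))
  · rw [mul_comm, hs₀φ, arctan_mul_tan_eq_self_iff ⟨by linarith, ht⟩,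
      cos_eq_one_iff_of_lt_of_lt (by linarith) (by linarith [hdiam x y]), dist_eq_zero]

/-- Projection of a point `[x,t]`, `0 ≤ t < π/2`, onto the half-meridian geodesic
`γ_s = [y, sπ/2]`, `s ∈ [0,1]`: the unique minimizer of `s ↦ d_Susp([x,t], γ_s)` on `[0,1]`
is at the parameter `s₀` with `(π/2)·s₀ = arctan(cos(d(x,y))·tan t)`; moreover the
minimizing height `(π/2)·s₀` equals `t` iff `[x,t] = γ_{s₀}`, i.e. `x = y` or `t = 0`. -/
theorem stmt_11 {X : Type*} [MetricSpace X] [CompactSpace X]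
    (hdiam : ∀ a b : X, dist a b < π / 2)
    (x y : X) (t : ℝ) (ht0 : 0 ≤ t) (ht : t < π / 2) :
    ∀ s₀ : ℝ, s₀ = Real.arctan (Real.cos (dist x y) * Real.tan t) / (π / 2) →
      s₀ ∈ Set.Icc (0 : ℝ) 1 ∧
      (∀ s ∈ Set.Icc (0 : ℝ) 1, s ≠ s₀ →
        dSusp x t y (s₀ * (π / 2)) < dSusp x t y (s * (π / 2))) ∧
      ((π / 2) * s₀ = t ↔ x = y ∨ t = 0) :=
  stmt_11_general hdiam x y t ht0 ht
end

section
/- Let X be a compact metric space with diam(X) < π/2 and p > 1. In Susp(X), geodesics starting at a vertex are non-branching: if γ and γ' are constant-speed geodesics in Susp(X) with γ₀ = γ'₀ = 𝟎 and γ_t = γ'_t for some t ∈ (0,1), then γ₁ = γ'₁. -/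
/-- In the spherical suspension of a compact metric space with `diam(X) < π/2`,
constant-speed geodesics starting at the vertex `𝟎` are non-branching: if
`γ₀ = γ'₀ = 𝟎` and `γ_t = γ'_t` for some `t ∈ (0,1)`, then `γ₁ = γ'₁`. -/
theorem stmt_18 {X S : Type*} [MetricSpace X] [CompactSpace X] [Nonempty X]
    [MetricSpace S]
    (hdiam : ∀ a b : X, dist a b < Real.pi / 2)
    (susp : SuspensionOf X S)
    (γ γ' : ℝ → S)
    (h0 : γ 0 = susp.pt (Classical.arbitrary X) 0)
    (h0' : γ' 0 = susp.pt (Classical.arbitrary X) 0)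
    (hγ : ∀ s t : ℝ, s ∈ Set.Icc (0 : ℝ) 1 → t ∈ Set.Icc (0 : ℝ) 1 →
      dist (γ s) (γ t) = |s - t| * dist (γ 0) (γ 1))
    (hγ' : ∀ s t : ℝ, s ∈ Set.Icc (0 : ℝ) 1 → t ∈ Set.Icc (0 : ℝ) 1 →
      dist (γ' s) (γ' t) = |s - t| * dist (γ' 0) (γ' 1))
    (t : ℝ) (ht : t ∈ Set.Ioo (0 : ℝ) 1) (heq : γ t = γ' t) :
    γ 1 = γ' 1 := by
  set a := Classical.arbitrary X with ha
  have h0mem : (0:ℝ) ∈ Set.Icc (0:ℝ) Real.pi := ⟨le_refl _, Real.pi_nonneg⟩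
  have htmem : t ∈ Set.Icc (0:ℝ) 1 := ⟨ht.1.le, ht.2.le⟩
  have h0m1 : (0:ℝ) ∈ Set.Icc (0:ℝ) 1 := ⟨le_refl _, zero_le_one⟩
  have h1m1 : (1:ℝ) ∈ Set.Icc (0:ℝ) 1 := ⟨zero_le_one, le_refl _⟩
  -- distance from vertex
  have hvert : ∀ (x : X) (s : ℝ), s ∈ Set.Icc (0:ℝ) Real.pi →
      dist (susp.pt a 0) (susp.pt x s) = s := by
    intro x s hs
    rw [susp.dist_eq a x 0 s h0mem hs]
    simp [Real.arccos_cos hs.1 hs.2]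
  have hγ0' : γ 0 = γ' 0 := by rw [h0, h0']
  set ℓ := dist (γ 0) (γ 1) with hℓ
  have hℓeq : dist (γ' 0) (γ' 1) = ℓ := by
    have e1 := hγ 0 t h0m1 htmem
    have e2 := hγ' 0 t h0m1 htmem
    rw [hγ0', heq] at e1
    rw [e1] at e2
    have habs : |0 - t| = t := by rw [abs_sub_comm]; simp [abs_of_pos ht.1]
    rw [habs] at e2
    exact (mul_left_cancel₀ (ne_of_gt ht.1) e2).symm
  -- decompositions
  obtain ⟨x, s, hs, hx⟩ := susp.surj (γ 1)
  obtain ⟨x', s', hs', hx'⟩ := susp.surj (γ' 1)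
  obtain ⟨y, r, hr, hy⟩ := susp.surj (γ t)
  have hsℓ : s = ℓ := by
    have := hvert x s hs
    rw [hx, ← h0] at this
    rw [← this]
  have hs'ℓ : s' = ℓ := by
    have := hvert x' s' hs'
    rw [hx', ← h0'] at this
    rw [← this, hℓeq]
  have hrtℓ : r = t * ℓ := by
    have := hvert y r hr
    rw [hy, ← h0] at this
    have e1 := hγ 0 t h0m1 htmem
    have habs : |0 - t| = t := by rw [abs_sub_comm]; simp [abs_of_pos ht.1]
    rw [habs] at e1
    rw [← this, e1]
  have hℓmem : ℓ ∈ Set.Icc (0:ℝ) Real.pi := hsℓ ▸ hs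
  rcases eq_or_lt_of_le hℓmem.1 with hℓ0 | hℓpos
  · -- ℓ = 0
    have hg : γ 1 = γ 0 := by
      have : dist (γ 0) (γ 1) = 0 := hℓ0.symm
      exact (eq_of_dist_eq_zero this).symm
    have hg' : γ' 1 = γ' 0 := by
      have : dist (γ' 0) (γ' 1) = 0 := by rw [hℓeq, ← hℓ0]
      exact (eq_of_dist_eq_zero this).symm
    rw [hg, hg', hγ0']
  rcases eq_or_lt_of_le hℓmem.2 with hℓpi | hℓlt
  · -- ℓ = π : apex is a single point
    have : dist (γ 1) (γ' 1) = 0 := by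
      rw [hx.symm, hx'.symm, susp.dist_eq x x' s s' hs hs', hsℓ, hs'ℓ, hℓpi]
      simp
    exact eq_of_dist_eq_zero this
  · -- 0 < ℓ < π : the generic case
    have hsinℓ : 0 < Real.sin ℓ := Real.sin_pos_of_pos_of_lt_pi hℓpos hℓlt
    have htℓpos : 0 < t * ℓ := mul_pos ht.1 hℓpos
    have htℓlt : t * ℓ < Real.pi := lt_of_lt_of_le
      (by nlinarith [ht.2, hℓpos]) hℓmem.2
    have hsintℓ : 0 < Real.sin (t * ℓ) := Real.sin_pos_of_pos_of_lt_pi htℓpos htℓlt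
    have key : ∀ (z : X), dist (susp.pt y (t * ℓ)) (susp.pt z ℓ) = (1 - t) * ℓ → z = y := by
      intro z hz
      rw [susp.dist_eq y z (t*ℓ) ℓ ⟨htℓpos.le, htℓlt.le⟩ hℓmem] at hz
      set D := dist y z with hD
      set A := Real.cos (t*ℓ) * Real.cos ℓ + Real.sin (t*ℓ) * Real.sin ℓ * Real.cos D with hA
      have hDnn : 0 ≤ D := dist_nonneg
      have hcosD1 : Real.cos D ≤ 1 := Real.cos_le_one D
      have hcosDm1 : -1 ≤ Real.cos D := Real.neg_one_le_cos D
      have hub : A ≤ 1 := by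
        have h1 : Real.cos (ℓ - t*ℓ) ≤ 1 := Real.cos_le_one _
        rw [Real.cos_sub] at h1
        nlinarith [mul_nonneg hsintℓ.le hsinℓ.le]
      have hlb : -1 ≤ A := by
        have h1 : -1 ≤ Real.cos (t*ℓ + ℓ) := Real.neg_one_le_cos _
        rw [Real.cos_add] at h1
        nlinarith [mul_nonneg hsintℓ.le hsinℓ.le]
      have hcosEq : Real.cos ((1-t)*ℓ) = A := by
        rw [← hz, Real.cos_arccos hlb hub]
      have hexp : Real.cos ((1-t)*ℓ) =
          Real.cos ℓ * Real.cos (t*ℓ) + Real.sin ℓ * Real.sin (t*ℓ) := by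
        have : (1-t)*ℓ = ℓ - t*ℓ := by ring
        rw [this, Real.cos_sub]
      rw [hexp, hA] at hcosEq
      have hcD : Real.cos D = 1 := by
        have hpos : 0 < Real.sin (t*ℓ) * Real.sin ℓ := mul_pos hsintℓ hsinℓ
        nlinarith
      have hD0 : D = 0 := by
        have hDlt : D < Real.pi := lt_trans (hdiam y z) (by linarith [Real.pi_pos])
        exact Real.injOn_cos ⟨hDnn, hDlt.le⟩
          ⟨le_refl _, Real.pi_nonneg⟩ (by simpa using hcD)
      exact (eq_of_dist_eq_zero hD0).symm
    have habs1t : |t - 1| = 1 - t := by rw [abs_sub_comm]; simp [abs_of_pos (by linarith [ht.2] : (0:ℝ) < 1 - t)]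
    have hxy : x = y := by
      apply key
      have e := hγ t 1 htmem h1m1
      rw [habs1t, ← hy, ← hx, hrtℓ, hsℓ] at e
      exact e
    have hx'y : x' = y := by
      apply key
      have e := hγ' t 1 htmem h1m1
      rw [habs1t, hℓeq, ← heq, ← hy, ← hx', hrtℓ, hs'ℓ] at e
      exact e
    rw [← hx, ← hx', hsℓ, hs'ℓ, hxy, hx'y]
end
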